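/- arXiv:2303.01422 — 5 statements merged into one kernel-verified Lean document; each statement's English description precedes it below -/
import Mathlib

section
/- If V_1, ..., V_{n+1} are exchangeable real-valued random variables, then for any β ∈ (0,1), the probability that V_{n+1} ≤ Quantile(β; {V_1,...,V_n} ∪ {∞}) is at least β, where Quantile(β; S) for a finite multiset S of size m denotes the ⌈βm⌉-th smallest element of S. -/
open MeasureTheory

section ListAux
variable {α : Type*} [LinearOrder α]

lemma aux_countP_lt_le {l : List α} (hl : l.Pairwise (· ≤ ·))
    {i : ℕ} (hi : i < l.length) {x : α} (hx : x ≤ l[i]) :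
    l.countP (fun y => decide (y < x)) ≤ i := by
  have hdec := List.take_append_drop i l
  have hdrop : (l.drop i).countP (fun y => decide (y < x)) = 0 := by
    rw [List.countP_eq_zero]
    intro a ha
    rw [List.drop_eq_getElem_cons hi] at ha
    have hle : l[i] ≤ a := by
      rcases List.mem_cons.mp ha with h | h
      · exact h ▸ le_refl _
      · have hs : (l.drop i).Pairwise (· ≤ ·) := hl.drop
        rw [List.drop_eq_getElem_cons hi, List.pairwise_cons] at hs
        exact hs.1 a h
    simp only [decide_eq_true_eq, not_lt]
    exact le_trans hx hle
  calc l.countP (fun y => decide (y < x))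
      = (l.take i).countP _ + (l.drop i).countP _ := by
        conv_lhs => rw [← hdec, List.countP_append]
    _ ≤ i := by
        rw [hdrop, add_zero]
        exact le_trans (List.countP_le_length) (by simp)

lemma aux_countP_ge {l : List α} (hl : l.Pairwise (· ≤ ·))
    {i : ℕ} (hi : i < l.length) {p : α → Bool} (hp : ∀ y, y ≤ l[i] → p y) :
    i + 1 ≤ l.countP p := by
  have hdec := List.take_append_drop i l
  have htakelen : (l.take i).length = i := by simp; omega
  have hpair : ∀ a ∈ l.take i, ∀ b ∈ l.drop i, a ≤ b := by
    have h2 : (l.take i ++ l.drop i).Pairwise (· ≤ ·) := by rw [hdec]; exact hl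
    exact fun a ha b hb => List.pairwise_append.mp h2 |>.2.2 a ha b hb
  have hmemdrop : l[i] ∈ l.drop i := by
    rw [List.drop_eq_getElem_cons hi]; exact List.mem_cons_self
  have htake : (l.take i).countP p = i := by
    rw [List.countP_eq_length_filter, List.filter_eq_self.mpr, htakelen]
    intro a ha
    exact hp a (hpair a ha _ hmemdrop)
  have hdrop : 1 ≤ (l.drop i).countP p := by
    rw [List.drop_eq_getElem_cons hi, List.countP_cons, hp l[i] le_rfl]
    simp
  calc i + 1 ≤ (l.take i).countP p + (l.drop i).countP p := by omega
    _ = l.countP p := by conv_rhs => rw [← hdec, List.countP_append]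

lemma aux_le_getElem_iff {l : List α} (hl : l.Pairwise (· ≤ ·))
    {i : ℕ} (hi : i < l.length) (x : α) :
    x ≤ l[i] ↔ l.countP (fun y => decide (y < x)) ≤ i := by
  constructor
  · exact fun hx => aux_countP_lt_le hl hi hx
  · intro h
    by_contra hlt
    push_neg at hlt
    have := aux_countP_ge hl hi (p := fun y => decide (y < x))
      (fun y hy => by simpa using lt_of_le_of_lt hy hlt)
    omega

end ListAux

open scoped Classical in
/-- Finset-card version of countP via the sorted list. -/
lemma aux_card_filter_eq {m : ℕ} (f : Fin m → ℝ) (p : ℝ → Prop) [DecidablePred p] :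
    (Finset.univ.filter fun j => p (f j)).card
      = ((Finset.univ.val.map f).sort (· ≤ ·)).countP (fun y => decide (p y)) := by
  have h1 : (Finset.univ.filter fun j => p (f j)).card
      = Multiset.countP p (Finset.univ.val.map f) := by
    rw [Multiset.countP_map]
    rfl
  rw [h1]
  conv_lhs => rw [← Multiset.sort_eq (Finset.univ.val.map f) (· ≤ ·)]
  rw [Multiset.coe_countP]

/-- Pointwise counting lemma: at least `k` indices have strict rank `≤ k - 1`. -/
lemma aux_count {m k : ℕ} (f : Fin m → ℝ) (hk1 : 1 ≤ k) (hkm : k ≤ m) :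
    k ≤ (Finset.univ.filter fun j =>
          (Finset.univ.filter fun i => f i < f j).card ≤ k - 1).card := by
  set l : List ℝ := (Finset.univ.val.map f).sort (· ≤ ·) with hl
  have hsorted : l.Pairwise (· ≤ ·) := Multiset.pairwise_sort _ _
  have hlen : l.length = m := by simp [hl]
  have hi : k - 1 < l.length := by omega
  set t : ℝ := l[k-1] with ht
  have h1 : k ≤ (Finset.univ.filter fun j => f j ≤ t).card := by
    rw [aux_card_filter_eq f (· ≤ t), ← hl]
    have := aux_countP_ge hsorted hi (p := fun y => decide (y ≤ t))
      (fun y hy => by simpa using hy)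
    omega
  have h2 : ∀ j : Fin m, f j ≤ t →
      (Finset.univ.filter fun i => f i < f j).card ≤ k - 1 := by
    intro j hj
    rw [aux_card_filter_eq f (· < f j), ← hl]
    calc l.countP (fun y => decide (y < f j))
        ≤ l.countP (fun y => decide (y < t)) := by
          apply List.countP_mono_left
          intro y _ h
          simp only [decide_eq_true_eq] at h ⊢
          exact lt_of_lt_of_le h hj
      _ ≤ k - 1 := aux_countP_lt_le hsorted hi le_rfl
  refine le_trans h1 (Finset.card_le_card ?_)
  intro j hj
  simp only [Finset.mem_filter, Finset.mem_univ, true_and] at hj ⊢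
  exact h2 j hj

/-- Measurability of the rank event. -/
lemma aux_measB {m : ℕ} (j : Fin m) (c : ℕ) :
    MeasurableSet {f : Fin m → ℝ | (Finset.univ.filter fun i => f i < f j).card ≤ c} := by
  have hg : Measurable fun f : Fin m → ℝ =>
      (Finset.univ.filter fun i => f i < f j).card := by
    simp_rw [Finset.card_filter]
    apply Finset.measurable_sum
    intro i _
    exact Measurable.ite (measurableSet_lt (measurable_pi_apply i) (measurable_pi_apply j))
      measurable_const measurable_const
  exact hg measurableSet_Iic

/-- Reindexing a filter-card by a permutation. -/
lemma aux_card_perm {m : ℕ} (σ : Equiv.Perm (Fin m)) (p : Fin m → Prop) [DecidablePred p] :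
    (Finset.univ.filter fun i => p (σ i)).card = (Finset.univ.filter p).card := by
  have h : (Finset.univ.filter fun i => p (σ i))
      = (Finset.univ.filter p).map σ.symm.toEmbedding := by
    ext a
    simp [Finset.mem_map_equiv]
  rw [h, Finset.card_map]

/-- Removing the trivially false `last` index from a filter over `Fin (m+1)`. -/
lemma aux_card_castSucc {m : ℕ} (p : Fin (m+1) → Prop) [DecidablePred p]
    (hp : ¬ p (Fin.last m)) :
    (Finset.univ.filter p).card = (Finset.univ.filter fun i : Fin m => p i.castSucc).card := by
  rw [Fin.univ_castSuccEmb, Finset.filter_cons, if_neg hp, Finset.filter_map, Finset.card_map]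
  rfl

open scoped Classical in
/-- If every point lies in at least `k` of the sets, the measures sum to at least `k`. -/
lemma aux_sum_measure {Ω : Type*} [MeasurableSpace Ω] (ℙ : Measure Ω) [IsProbabilityMeasure ℙ]
    {ι : Type*} [Fintype ι] (A : ι → Set Ω) (hA : ∀ j, MeasurableSet (A j)) (k : ℕ)
    (h : ∀ ω, k ≤ (Finset.univ.filter fun j => ω ∈ A j).card) :
    (k : ENNReal) ≤ ∑ j, ℙ (A j) := by
  calc (k : ENNReal) = ∫⁻ _, (k : ENNReal) ∂ℙ := by simp
    _ ≤ ∫⁻ ω, ∑ j, (A j).indicator 1 ω ∂ℙ := by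
        apply lintegral_mono
        intro ω
        dsimp only
        have hc : ∑ j, (A j).indicator (1 : Ω → ENNReal) ω
            = ((Finset.univ.filter fun j => ω ∈ A j).card : ENNReal) := by
          rw [Finset.card_filter]
          push_cast
          refine Finset.sum_congr rfl fun j _ => ?_
          by_cases hj : ω ∈ A j <;> simp [Set.indicator_apply, hj]
        rw [hc]
        exact_mod_cast h ω
    _ = ∑ j, ℙ (A j) := by
        rw [lintegral_finset_sum (f := fun j => (A j).indicator 1) Finset.univ
          (fun j _ => (measurable_const.indicator (hA j)))]
        exact Finset.sum_congr rfl fun j _ => lintegral_indicator_one (hA j)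

/-- The `β`-quantile of a finite multiset of extended reals:
the `⌈β·m⌉`-th smallest element, where `m` is the size of the multiset. -/
noncomputable def mquantile (β : ℝ) (s : Multiset EReal) : EReal :=
  (s.sort (· ≤ ·)).getD (⌈β * (s.card : ℝ)⌉.toNat - 1) ⊤

theorem stmt_0 {Ω : Type*} [MeasurableSpace Ω] (ℙ : Measure Ω) [IsProbabilityMeasure ℙ]
    (n : ℕ) (V : Fin (n + 1) → Ω → ℝ) (hmeas : ∀ i, Measurable (V i))
    (hexch : ∀ σ : Equiv.Perm (Fin (n + 1)),
      Measure.map (fun ω i => V (σ i) ω) ℙ = Measure.map (fun ω i => V i ω) ℙ)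
    (β : ℝ) (hβ : β ∈ Set.Ioo (0 : ℝ) 1) :
    ENNReal.ofReal β ≤
      ℙ {ω | ((V (Fin.last n) ω : ℝ) : EReal) ≤
        mquantile β
          ((Finset.univ.val.map fun i : Fin n => ((V i.castSucc ω : ℝ) : EReal)) + {⊤})} := by
  obtain ⟨hβ0, hβ1⟩ := hβ
  set k : ℕ := (⌈β * ((n : ℝ) + 1)⌉).toNat with hkdef
  have hcpos : (0:ℝ) < β * ((n:ℝ)+1) := by positivity
  have hceil1 : (1:ℤ) ≤ ⌈β * ((n:ℝ)+1)⌉ := Int.ceil_pos.mpr hcpos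
  have hk1 : 1 ≤ k := by
    rw [hkdef]
    exact (Int.le_toNat (by omega)).mpr (by exact_mod_cast hceil1)
  have hkm : k ≤ n + 1 := by
    rw [hkdef]
    rw [Int.toNat_le]
    apply Int.ceil_le.mpr
    push_cast
    nlinarith
  set T : Ω → (Fin (n+1) → ℝ) := fun ω i => V i ω with hTdef
  have hT : Measurable T := measurable_pi_lambda _ hmeas
  set B : Fin (n+1) → Set (Fin (n+1) → ℝ) :=
    fun j => {f | (Finset.univ.filter fun i => f i < f j).card ≤ k - 1} with hBdef
  have hB : ∀ j, MeasurableSet (B j) := fun j => aux_measB j (k-1)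
  have hA : ∀ j, MeasurableSet (T ⁻¹' B j) := fun j => hT (hB j)
  -- Step 1: the event equals `T ⁻¹' B (Fin.last n)`
  have hset : {ω | ((V (Fin.last n) ω : ℝ) : EReal) ≤
        mquantile β
          ((Finset.univ.val.map fun i : Fin n => ((V i.castSucc ω : ℝ) : EReal)) + {⊤})}
      = T ⁻¹' B (Fin.last n) := by
    ext ω
    set x : EReal := ((V (Fin.last n) ω : ℝ) : EReal) with hx
    simp only [Set.mem_setOf_eq, Set.mem_preimage, hBdef]
    set s : Multiset EReal :=
      (Finset.univ.val.map fun i : Fin n => ((V i.castSucc ω : ℝ) : EReal)) + {⊤} with hs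
    have hcards : Multiset.card s = n + 1 := by simp [hs]
    have hsortlen : (s.sort (· ≤ ·)).length = n + 1 := by rw [Multiset.length_sort, hcards]
    have hi : k - 1 < (s.sort (· ≤ ·)).length := by omega
    have hquant : mquantile β s = (s.sort (· ≤ ·))[k-1] := by
      rw [mquantile, hcards]
      have hknat : (⌈β * ((n+1 : ℕ) : ℝ)⌉).toNat = k := by
        rw [hkdef]; norm_num
      rw [hknat, List.getD_eq_getElem _ _ hi]
    rw [hquant, aux_le_getElem_iff (Multiset.pairwise_sort _ _) hi]
    have e1 : (s.sort (· ≤ ·)).countP (fun y => decide (y < x))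
        = Multiset.countP (fun y => y < x) s := by
      conv_rhs => rw [← Multiset.sort_eq s (· ≤ ·)]
      rw [Multiset.coe_countP]
    have e2 : Multiset.countP (fun y => y < x) s
        = (Finset.univ.filter fun i : Fin n => V i.castSucc ω < V (Fin.last n) ω).card := by
      rw [hs, Multiset.countP_add, Multiset.countP_map]
      have h0 : Multiset.countP (fun y => y < x) ({⊤} : Multiset EReal) = 0 := by
        rw [Multiset.countP_eq_zero]
        intro a ha
        rw [Multiset.mem_singleton] at ha
        subst ha
        exact not_top_lt
      rw [h0, add_zero]
      have : (Multiset.filter (fun i : Fin n => ((V i.castSucc ω : ℝ) : EReal) < x)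
            Finset.univ.val)
          = Multiset.filter (fun i : Fin n => V i.castSucc ω < V (Fin.last n) ω)
            Finset.univ.val := by
        apply Multiset.filter_congr
        intro i _
        rw [hx]
        exact EReal.coe_lt_coe_iff
      rw [this]
      rfl
    have e3 : (Finset.univ.filter fun i : Fin (n+1) => T ω i < T ω (Fin.last n)).card
        = (Finset.univ.filter fun i : Fin n => V i.castSucc ω < V (Fin.last n) ω).card := by
      exact aux_card_castSucc (fun i => T ω i < T ω (Fin.last n)) (lt_irrefl _)
    rw [e1, e2, ← e3]
  -- Step 2: all the events have the same probability
  have hμeq : ∀ j, ℙ (T ⁻¹' B j) = ℙ (T ⁻¹' B (Fin.last n)) := by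
    intro j
    set σ : Equiv.Perm (Fin (n+1)) := Equiv.swap j (Fin.last n) with hσ
    have hS : Measurable fun f : Fin (n+1) → ℝ => f ∘ σ :=
      measurable_pi_lambda _ fun i => measurable_pi_apply _
    have hmap : Measure.map (fun f : Fin (n+1) → ℝ => f ∘ σ) (Measure.map T ℙ)
        = Measure.map T ℙ := by
      rw [Measure.map_map hS hT]
      exact hexch σ
    have hpre : (fun f : Fin (n+1) → ℝ => f ∘ σ) ⁻¹' (B (Fin.last n)) = B j := by
      ext f
      simp only [Set.mem_preimage, hBdef, Set.mem_setOf_eq, Function.comp]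
      have hσlast : σ (Fin.last n) = j := Equiv.swap_apply_right _ _
      rw [show (Finset.univ.filter fun i => f (σ i) < f (σ (Fin.last n))).card
            = (Finset.univ.filter fun i => f i < f (σ (Fin.last n))).card from
          aux_card_perm σ (fun i => f i < f (σ (Fin.last n))), hσlast]
    calc ℙ (T ⁻¹' B j) = Measure.map T ℙ (B j) := (Measure.map_apply hT (hB j)).symm
      _ = Measure.map T ℙ ((fun f : Fin (n+1) → ℝ => f ∘ σ) ⁻¹' (B (Fin.last n))) := by
          rw [hpre]
      _ = Measure.map (fun f : Fin (n+1) → ℝ => f ∘ σ) (Measure.map T ℙ) (B (Fin.last n)) :=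
          (Measure.map_apply hS (hB _)).symm
      _ = Measure.map T ℙ (B (Fin.last n)) := by rw [hmap]
      _ = ℙ (T ⁻¹' B (Fin.last n)) := Measure.map_apply hT (hB _)
  -- Step 3: pointwise, at least `k` of the events hold
  classical
  have hcount : ∀ ω, k ≤ (Finset.univ.filter fun j => ω ∈ T ⁻¹' B j).card := by
    intro ω
    have h := aux_count (f := T ω) hk1 hkm
    have heq : (Finset.univ.filter fun j => ω ∈ T ⁻¹' B j)
        = (Finset.univ.filter fun j =>
            (Finset.univ.filter fun i => T ω i < T ω j).card ≤ k - 1) := by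
      apply Finset.filter_congr
      intro j _
      simp [hBdef]
    rw [heq]
    exact h
  have hsum : (k : ENNReal) ≤ ∑ j, ℙ (T ⁻¹' B j) :=
    aux_sum_measure ℙ _ hA k hcount
  have hsum' : ∑ j, ℙ (T ⁻¹' B j) = (↑(n+1) : ENNReal) * ℙ (T ⁻¹' B (Fin.last n)) := by
    rw [Finset.sum_congr rfl (fun j _ => hμeq j), Finset.sum_const, Finset.card_univ,
      Fintype.card_fin, nsmul_eq_mul]
  rw [hset]
  have hmul : (↑(n+1) : ENNReal) * ENNReal.ofReal β
      ≤ (↑(n+1) : ENNReal) * ℙ (T ⁻¹' B (Fin.last n)) := by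
    calc (↑(n+1) : ENNReal) * ENNReal.ofReal β
        = ENNReal.ofReal (((n+1 : ℕ) : ℝ) * β) := by
          rw [ENNReal.ofReal_mul (by positivity), ENNReal.ofReal_natCast]
      _ ≤ (k : ENNReal) := by
          rw [← ENNReal.ofReal_natCast k]
          apply ENNReal.ofReal_le_ofReal
          have hki : (k : ℤ) = ⌈β * ((n:ℝ)+1)⌉ := by
            rw [hkdef, Int.toNat_of_nonneg (by omega)]
          have : β * ((n:ℝ)+1) ≤ (k : ℝ) := by
            have := Int.le_ceil (β * ((n:ℝ)+1))
            have h2 : ((k:ℤ) : ℝ) = ((⌈β * ((n:ℝ)+1)⌉ : ℤ) : ℝ) := by exact_mod_cast hki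
            push_cast at h2 ⊢
            linarith
          push_cast
          linarith
      _ ≤ (↑(n+1) : ENNReal) * ℙ (T ⁻¹' B (Fin.last n)) := hsum' ▸ hsum
  exact (ENNReal.mul_le_mul_iff_right (by simp) (by simp)).mp hmul
end

section
/- Let V_1,...,V_{n+1} be exchangeable random variables and let q̂ be the ⌈β(n+1)⌉-th smallest value among V_1,...,V_{n+1}. Then P(V_{n+1} ≤ q̂) ≥ β when no ties occur the probability equals exactly ⌈β(n+1)⌉/(n+1), which is at least β. -/
open MeasureTheory

open Finset
open scoped ENNReal

open Classical in
noncomputable def rnk {n : ℕ} (x : Fin (n + 1) → ℝ) (i : Fin (n + 1)) : ℕ :=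
  (Finset.univ.filter fun j => x j ≤ x i).card

open Classical in
lemma aux_quantile_iff {n : ℕ} (β : ℝ) {x : Fin (n + 1) → ℝ} (hx : Function.Injective x)
    {k : ℕ} (hk : (⌈β * (n + 1 : ℝ)⌉).toNat = k) (hk1 : 1 ≤ k) (hk2 : k ≤ n + 1) :
    (∀ i, (((x i : ℝ) : EReal) ≤
        mquantile β (Finset.univ.val.map fun j : Fin (n + 1) => ((x j : ℝ) : EReal)) ↔
      rnk x i ≤ k)) ∧
    (Finset.univ.filter fun i => rnk x i ≤ k).card = k := by
  set y : Fin (n + 1) → EReal := fun j => ((x j : ℝ) : EReal) with hy_def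
  have hy : Function.Injective y := fun a b h => hx (EReal.coe_eq_coe_iff.1 h)
  set s : Multiset EReal := Finset.univ.val.map y with hs_def
  set t : Finset EReal := Finset.univ.image y with ht_def
  have htv : t.val = s := by
    rw [ht_def, Finset.image_val, Multiset.dedup_eq_self.2]
    exact Multiset.Nodup.map hy Finset.univ.nodup
  have ht : t.card = n + 1 := by
    rw [Finset.card_image_of_injective _ hy, Finset.card_univ, Fintype.card_fin]
  have hscard : s.card = n + 1 := by rw [← htv]; exact ht
  set e := t.orderEmbOfFin ht with he_def
  -- the sorted list of s is the sorted list of t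
  have hsort : s.sort (· ≤ ·) = t.sort (· ≤ ·) := by rw [Finset.sort, htv]
  have hlen : (s.sort (· ≤ ·)).length = n + 1 := by rw [Multiset.length_sort, hscard]
  have hklt : k - 1 < n + 1 := by omega
  have hq : mquantile β s = e ⟨k - 1, hklt⟩ := by
    rw [mquantile, hscard]
    push_cast
    rw [hk, List.getD_eq_getElem _ _ (by rw [hlen]; omega)]
    rw [Finset.orderEmbOfFin_apply]
    simp only [hsort, Fin.getElem_fin]
  -- t is the image of e
  have hsurj : ∀ v ∈ t, ∃ m : Fin (n + 1), e m = v := by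
    intro v hv
    refine ⟨(t.orderIsoOfFin ht).symm ⟨v, hv⟩, ?_⟩
    rw [← Finset.coe_orderIsoOfFin_apply, OrderIso.apply_symm_apply]
  have himg : t = Finset.univ.image e := by
    apply Finset.eq_of_subset_of_card_le
    · intro v hv
      obtain ⟨m, hm⟩ := hsurj v hv
      exact Finset.mem_image.2 ⟨m, Finset.mem_univ m, hm⟩
    · rw [Finset.card_image_of_injective _ e.injective, Finset.card_univ, Fintype.card_fin, ht]
  -- counting lemma
  have hcount : ∀ m : Fin (n + 1), (Finset.univ.filter fun j => y j ≤ e m).card = m + 1 := by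
    intro m
    have h1 : (Finset.univ.filter fun j => y j ≤ e m).card
        = (t.filter fun v => v ≤ e m).card := by
      rw [ht_def, Finset.filter_image, Finset.card_image_of_injective _ hy]
    have h2 : (t.filter fun v => v ≤ e m).card
        = (Finset.univ.filter fun m' : Fin (n + 1) => e m' ≤ e m).card := by
      rw [himg, Finset.filter_image, Finset.card_image_of_injective _ e.injective]
    have h3 : (Finset.univ.filter fun m' : Fin (n + 1) => e m' ≤ e m) = Finset.Iic m := by
      ext m'
      simp [e.le_iff_le]
    rw [h1, h2, h3, Fin.card_Iic]
  -- every y i is some e m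
  have hmem : ∀ i, ∃ m : Fin (n + 1), e m = y i := by
    intro i
    exact hsurj (y i) (Finset.mem_image_of_mem y (Finset.mem_univ i))
  have hrnk : ∀ i m, e m = y i → rnk x i = m + 1 := by
    intro i m hm
    have : rnk x i = (Finset.univ.filter fun j => y j ≤ y i).card := by
      rw [rnk]
      congr 1
      apply Finset.filter_congr
      intro j _
      simp [hy_def, EReal.coe_le_coe_iff]
    rw [this, ← hm, hcount]
  have hiff : ∀ i, (y i ≤ mquantile β s ↔ rnk x i ≤ k) := by
    intro i
    obtain ⟨m, hm⟩ := hmem i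
    rw [hq, ← hm, hrnk i m hm, e.le_iff_le, Fin.le_def]
    show (m : ℕ) ≤ k - 1 ↔ (m : ℕ) + 1 ≤ k
    omega
  refine ⟨hiff, ?_⟩
  have : (Finset.univ.filter fun i => rnk x i ≤ k)
      = (Finset.univ.filter fun i => y i ≤ e ⟨k - 1, hklt⟩) := by
    apply Finset.filter_congr
    intro i _
    rw [← hq]
    exact (hiff i).symm
  rw [this, hcount]
  show k - 1 + 1 = k
  omega
lemma rnk_measurable {n : ℕ} {α : Type*} [MeasurableSpace α] {f : Fin (n + 1) → α → ℝ}
    (hf : ∀ j, Measurable (f j)) (i : Fin (n + 1)) :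
    Measurable fun a => rnk (fun j => f j a) i := by
  have h : (fun a => rnk (fun j => f j a) i)
      = fun a => ∑ j : Fin (n + 1), if f j a ≤ f i a then 1 else 0 := by
    funext a; rw [rnk, Finset.card_filter]
  rw [h]
  exact Finset.measurable_sum _ fun j _ =>
    Measurable.ite (measurableSet_le (hf j) (hf i)) measurable_const measurable_const

lemma rnk_comp {n : ℕ} (x : Fin (n + 1) → ℝ) (σ : Equiv.Perm (Fin (n + 1))) (i : Fin (n + 1)) :
    rnk (fun j => x (σ j)) i = rnk x (σ i) := by
  simp only [rnk, Finset.card_filter]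
  exact Fintype.sum_equiv σ _ _ fun j => rfl

/-- The `⌈β(n+1)⌉`-th smallest value among all of `V_1, …, V_{n+1}`. -/
theorem stmt_4 {Ω : Type*} [MeasurableSpace Ω] (ℙ : Measure Ω) [IsProbabilityMeasure ℙ]
    (n : ℕ) (V : Fin (n + 1) → Ω → ℝ) (hmeas : ∀ i, Measurable (V i))
    (hexch : ∀ σ : Equiv.Perm (Fin (n + 1)),
      Measure.map (fun ω i => V (σ i) ω) ℙ = Measure.map (fun ω i => V i ω) ℙ)
    (hties : ∀ i j : Fin (n + 1), i ≠ j → ℙ {ω | V i ω = V j ω} = 0)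
    (β : ℝ) (hβ : β ∈ Set.Ioo (0 : ℝ) 1) :
    ℙ {ω | ((V (Fin.last n) ω : ℝ) : EReal) ≤
        mquantile β (Finset.univ.val.map fun i : Fin (n + 1) => ((V i ω : ℝ) : EReal))} =
      ENNReal.ofReal ((⌈β * (n + 1 : ℝ)⌉ : ℝ) / (n + 1)) ∧
    ENNReal.ofReal β ≤
      ℙ {ω | ((V (Fin.last n) ω : ℝ) : EReal) ≤
        mquantile β (Finset.univ.val.map fun i : Fin (n + 1) => ((V i ω : ℝ) : EReal))} := by
  classical
  obtain ⟨hβ0, hβ1⟩ := hβ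
  set k : ℕ := (⌈β * (n + 1 : ℝ)⌉).toNat with hk_def
  have hnpos : (0 : ℝ) < (n : ℝ) + 1 := by positivity
  have hcpos : 0 < ⌈β * (n + 1 : ℝ)⌉ := Int.ceil_pos.2 (by positivity)
  have hk1 : 1 ≤ k := by omega
  have hcle : ⌈β * (n + 1 : ℝ)⌉ ≤ ((n : ℤ) + 1) := by
    apply Int.ceil_le.2
    push_cast
    nlinarith
  have hk2 : k ≤ n + 1 := by omega
  set C : Fin (n + 1) → Set Ω := fun i => {ω | rnk (fun j => V j ω) i ≤ k} with hC_def
  have hC : ∀ i, MeasurableSet (C i) := fun i =>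
    (rnk_measurable hmeas i) ((Set.to_countable (Set.Iic k)).measurableSet)
  have hB : MeasurableSet {x : Fin (n + 1) → ℝ | rnk x (Fin.last n) ≤ k} := by
    have h := rnk_measurable (f := fun j (x : Fin (n + 1) → ℝ) => x j)
      (fun j => measurable_pi_apply j) (Fin.last n)
    exact h ((Set.to_countable (Set.Iic k)).measurableSet)
  have hCeq : ∀ i, ℙ (C i) = ℙ (C (Fin.last n)) := by
    intro i
    have hW : Measurable fun ω (j : Fin (n + 1)) => V j ω := measurable_pi_lambda _ hmeas
    set σ : Equiv.Perm (Fin (n + 1)) := Equiv.swap i (Fin.last n) with hσ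
    have hWσ : Measurable fun ω (j : Fin (n + 1)) => V (σ j) ω :=
      measurable_pi_lambda _ fun j => hmeas (σ j)
    have h1 : (Measure.map (fun ω (j : Fin (n + 1)) => V (σ j) ω) ℙ)
          {x : Fin (n + 1) → ℝ | rnk x (Fin.last n) ≤ k}
        = (Measure.map (fun ω (j : Fin (n + 1)) => V j ω) ℙ)
          {x : Fin (n + 1) → ℝ | rnk x (Fin.last n) ≤ k} := by
      rw [hexch σ]
    rw [Measure.map_apply hWσ hB, Measure.map_apply hW hB] at h1
    have h2 : (fun ω (j : Fin (n + 1)) => V (σ j) ω) ⁻¹'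
        {x : Fin (n + 1) → ℝ | rnk x (Fin.last n) ≤ k} = C i := by
      ext ω
      simp only [Set.mem_preimage, Set.mem_setOf_eq, hC_def]
      rw [rnk_comp (fun j => V j ω) σ (Fin.last n), hσ, Equiv.swap_apply_right]
    have h3 : (fun ω (j : Fin (n + 1)) => V j ω) ⁻¹'
        {x : Fin (n + 1) → ℝ | rnk x (Fin.last n) ≤ k} = C (Fin.last n) := rfl
    rw [h2, h3] at h1
    exact h1
  have hD : ℙ {ω | ¬ Function.Injective fun j => V j ω} = 0 := by
    have hsub : {ω | ¬ Function.Injective fun j => V j ω}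
        ⊆ ⋃ (i) (j) (_ : i ≠ j), {ω | V i ω = V j ω} := by
      intro ω hω
      simp only [Set.mem_setOf_eq, Function.Injective] at hω
      push_neg at hω
      obtain ⟨a, b, hab, hne⟩ := hω
      exact Set.mem_iUnion.2 ⟨a, Set.mem_iUnion.2 ⟨b, Set.mem_iUnion.2 ⟨hne, hab⟩⟩⟩
    exact measure_mono_null hsub (measure_iUnion_null fun i =>
      measure_iUnion_null fun j => measure_iUnion_null fun hne => hties i j hne)
  have hae : ∀ᵐ ω ∂ℙ, Function.Injective fun j => V j ω := by
    rw [MeasureTheory.ae_iff]; exact hD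
  have hpt : ∀ ω, Function.Injective (fun j => V j ω) →
      ∑ i : Fin (n + 1), (C i).indicator (1 : Ω → ℝ≥0∞) ω = (k : ℝ≥0∞) := by
    intro ω hω
    have hcard := (aux_quantile_iff β hω hk_def.symm hk1 hk2).2
    calc ∑ i : Fin (n + 1), (C i).indicator (1 : Ω → ℝ≥0∞) ω
        = ∑ i : Fin (n + 1), if rnk (fun j => V j ω) i ≤ k then (1 : ℝ≥0∞) else 0 := by
          refine Finset.sum_congr rfl fun i _ => ?_
          rw [Set.indicator_apply]
          simp only [hC_def, Set.mem_setOf_eq, Pi.one_apply]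
      _ = ((Finset.univ.filter fun i => rnk (fun j => V j ω) i ≤ k).card : ℝ≥0∞) := by
          rw [Finset.card_filter, Nat.cast_sum]
          exact Finset.sum_congr rfl fun i _ => by split_ifs <;> simp
      _ = (k : ℝ≥0∞) := by rw [hcard]
  have hsum : ∑ i : Fin (n + 1), ℙ (C i) = (k : ℝ≥0∞) := by
    have h1 : ∀ i : Fin (n + 1), ℙ (C i)
        = ∫⁻ ω, (C i).indicator (1 : Ω → ℝ≥0∞) ω ∂ℙ :=
      fun i => (lintegral_indicator_one (hC i)).symm
    calc ∑ i : Fin (n + 1), ℙ (C i)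
        = ∑ i : Fin (n + 1), ∫⁻ ω, (C i).indicator (1 : Ω → ℝ≥0∞) ω ∂ℙ :=
          Finset.sum_congr rfl fun i _ => h1 i
      _ = ∫⁻ ω, ∑ i : Fin (n + 1), (C i).indicator (1 : Ω → ℝ≥0∞) ω ∂ℙ :=
          (lintegral_finset_sum _ fun i _ => measurable_one.indicator (hC i)).symm
      _ = ∫⁻ _ , (k : ℝ≥0∞) ∂ℙ := lintegral_congr_ae (hae.mono hpt)
      _ = (k : ℝ≥0∞) := by simp
  have hne0 : ((n : ℝ≥0∞) + 1) ≠ 0 := by simp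
  have hnetop : ((n : ℝ≥0∞) + 1) ≠ ⊤ := by simp [ENNReal.natCast_ne_top]
  have hlast : ℙ (C (Fin.last n)) = (k : ℝ≥0∞) / ((n : ℝ≥0∞) + 1) := by
    rw [ENNReal.eq_div_iff hne0 hnetop]
    calc ((n : ℝ≥0∞) + 1) * ℙ (C (Fin.last n))
        = ∑ _i : Fin (n + 1), ℙ (C (Fin.last n)) := by
          rw [Finset.sum_const, Finset.card_univ, Fintype.card_fin, nsmul_eq_mul]
          push_cast; ring
      _ = ∑ i : Fin (n + 1), ℙ (C i) := Finset.sum_congr rfl fun i _ => (hCeq i).symm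
      _ = (k : ℝ≥0∞) := hsum
  have hE : ℙ {ω | ((V (Fin.last n) ω : ℝ) : EReal) ≤
      mquantile β (Finset.univ.val.map fun i : Fin (n + 1) => ((V i ω : ℝ) : EReal))}
      = ℙ (C (Fin.last n)) := by
    apply measure_congr
    rw [Filter.eventuallyEq_set]
    refine hae.mono fun ω hω => ?_
    simp only [Set.mem_setOf_eq, hC_def]
    exact (aux_quantile_iff β hω hk_def.symm hk1 hk2).1 (Fin.last n)
  have hcast : ((k : ℕ) : ℤ) = ⌈β * (n + 1 : ℝ)⌉ := by
    rw [hk_def]; exact Int.toNat_of_nonneg hcpos.le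
  have hceilk : (⌈β * (n + 1 : ℝ)⌉ : ℝ) = (k : ℝ) := by
    rw [← hcast]; norm_cast
  have hval : ENNReal.ofReal ((⌈β * (n + 1 : ℝ)⌉ : ℝ) / ((n : ℝ) + 1))
      = (k : ℝ≥0∞) / ((n : ℝ≥0∞) + 1) := by
    rw [hceilk, ENNReal.ofReal_div_of_pos hnpos, ENNReal.ofReal_natCast]
    congr 1
    rw [show ((n : ℝ) + 1) = (((n + 1 : ℕ) : ℝ)) by push_cast; ring,
      ENNReal.ofReal_natCast]
    push_cast; ring
  have hfinal : ℙ {ω | ((V (Fin.last n) ω : ℝ) : EReal) ≤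
      mquantile β (Finset.univ.val.map fun i : Fin (n + 1) => ((V i ω : ℝ) : EReal))}
      = ENNReal.ofReal ((⌈β * (n + 1 : ℝ)⌉ : ℝ) / ((n : ℝ) + 1)) := by
    rw [hE, hlast, hval]
  refine ⟨hfinal, ?_⟩
  rw [hfinal]
  refine ENNReal.ofReal_le_ofReal ?_
  rw [le_div_iff₀ hnpos]
  exact Int.le_ceil _
end

section
/- Split conformal coverage: Let (X_1,Y_1),...,(X_{n+1},Y_{n+1}) be exchangeable random pairs, let f̂ be a fixed (deterministic) function, and define residuals V_i = |Y_i − f̂(X_i)|. Let q̂ be the ⌈(1−α)(n+1)⌉-th smallest value of V_1,...,V_n (or +∞ if ⌈(1−α)(n+1)⌉ > n). Then P(Y_{n+1} ∈ [f̂(X_{n+1}) − q̂, f̂(X_{n+1}) + q̂]) ≥ 1 − α. -/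
open MeasureTheory

lemma aux_card_lt {N k : ℕ} (hk : k ≤ N) :
    ((Finset.univ : Finset (Fin N)).filter fun m : Fin N => (m : ℕ) < k).card = k := by
  have : ((Finset.univ : Finset (Fin N)).filter fun m : Fin N => (m : ℕ) < k)
      = (Finset.univ : Finset (Fin k)).map (Fin.castLEEmb hk) := by
    ext m
    simp only [Finset.mem_filter, Finset.mem_univ, true_and, Finset.mem_map,
      Fin.castLEEmb_apply]
    constructor
    · intro h; exact ⟨⟨m, h⟩, rfl⟩
    · rintro ⟨a, rfl⟩; simp
  rw [this, Finset.card_map, Finset.card_univ, Fintype.card_fin]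

lemma aux_rank {N : ℕ} (w : Fin N → ℝ) (k : ℕ) (hk : k ≤ N) :
    k ≤ (Finset.univ.filter
        fun j : Fin N => (Finset.univ.filter fun i => w i < w j).card < k).card := by
  classical
  set σ := Tuple.sort w with hσ
  have hmono := Tuple.monotone_sort w
  have hsub : ((Finset.univ : Finset (Fin N)).filter fun m : Fin N => (m : ℕ) < k).image σ ⊆
      Finset.univ.filter fun j : Fin N => (Finset.univ.filter fun i => w i < w j).card < k := by
    intro j hj
    simp only [Finset.mem_image, Finset.mem_filter, Finset.mem_univ, true_and] at hj ⊢
    obtain ⟨m, hm, rfl⟩ := hj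
    have hle : (Finset.univ.filter fun i => w i < w (σ m)).card ≤ (m : ℕ) := by
      have hsub2 : (Finset.univ.filter fun i : Fin N => w i < w (σ m)) ⊆
          ((Finset.univ : Finset (Fin N)).filter fun i' : Fin N => (i' : ℕ) < (m : ℕ)).image σ := by
        intro i hi
        simp only [Finset.mem_filter, Finset.mem_univ, true_and] at hi
        simp only [Finset.mem_image, Finset.mem_filter, Finset.mem_univ, true_and]
        refine ⟨σ.symm i, ?_, by simp⟩
        by_contra hlt
        push_neg at hlt
        have : w (σ m) ≤ w (σ (σ.symm i)) := hmono (by exact_mod_cast hlt)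
        simp only [Equiv.apply_symm_apply] at this
        exact absurd hi (not_lt.2 this)
      calc (Finset.univ.filter fun i : Fin N => w i < w (σ m)).card
          ≤ (((Finset.univ : Finset (Fin N)).filter fun i' : Fin N => (i' : ℕ) < (m : ℕ)).image σ).card :=
            Finset.card_le_card hsub2
        _ ≤ ((Finset.univ : Finset (Fin N)).filter fun i' : Fin N => (i' : ℕ) < (m : ℕ)).card :=
            Finset.card_image_le
        _ = (m : ℕ) := aux_card_lt (le_of_lt m.2)
    exact lt_of_le_of_lt hle hm
  calc k = (((Finset.univ : Finset (Fin N)).filter fun m : Fin N => (m : ℕ) < k).image σ).card := by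
        rw [Finset.card_image_of_injective _ σ.injective, aux_card_lt hk]
    _ ≤ _ := Finset.card_le_card hsub

lemma aux_sorted {L : List ℝ} (hL : L.Pairwise (· ≤ ·)) {k : ℕ} (hk1 : 1 ≤ k)
    (hk : k - 1 < L.length) {t : ℝ} (hcount : L.countP (fun x => decide (x < t)) < k) :
    t ≤ L[k-1] := by
  by_contra hlt
  push_neg at hlt
  have hall : ∀ j (hj : j < k), ∀ (h : j < L.length), L[j] < t := by
    intro j hj h
    rcases lt_or_eq_of_le (Nat.le_sub_one_of_lt hj) with hj' | hj'
    · exact lt_of_le_of_lt ((List.pairwise_iff_getElem.1 hL) j (k-1) h hk hj') hlt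
    · subst hj'; exact hlt
  have : k ≤ L.countP (fun x => decide (x < t)) := by
    have h1 : (L.take k).countP (fun x => decide (x < t)) = (L.take k).length := by
      apply List.countP_eq_length.2
      intro x hx
      obtain ⟨j, hj, hjx⟩ := List.mem_iff_getElem.1 hx
      simp only [List.getElem_take] at hjx
      have hjk : j < k := lt_of_lt_of_le hj (by simp [List.length_take])
      subst hjx
      exact decide_eq_true (hall j hjk _)
    have h2 : (L.take k).length = k := by
      rw [List.length_take]; omega
    calc k = (L.take k).countP (fun x => decide (x < t)) := by rw [h1, h2]
      _ ≤ L.countP (fun x => decide (x < t)) := by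
          conv_rhs => rw [← List.take_append_drop k L]
          rw [List.countP_append]; omega
  omega

lemma aux_card_reindex {N : ℕ} (σ : Equiv.Perm (Fin N)) (Q : Fin N → Prop) [DecidablePred Q] :
    (Finset.univ.filter fun i => Q (σ i)).card = (Finset.univ.filter Q).card := by
  apply Finset.card_bij' (fun i _ => σ i) (fun i _ => σ.symm i) <;>
    simp [Finset.mem_filter]

theorem stmt_5 {Ω 𝒳 : Type*} [MeasurableSpace Ω] [MeasurableSpace 𝒳]
    (ℙ : Measure Ω) [IsProbabilityMeasure ℙ]
    (n : ℕ) (X : Fin (n + 1) → Ω → 𝒳) (Y : Fin (n + 1) → Ω → ℝ)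
    (hmeas : ∀ i, Measurable fun ω => (X i ω, Y i ω))
    (hexch : ∀ σ : Equiv.Perm (Fin (n + 1)),
      Measure.map (fun ω i => (X (σ i) ω, Y (σ i) ω)) ℙ =
        Measure.map (fun ω i => (X i ω, Y i ω)) ℙ)
    (f : 𝒳 → ℝ) (hf : Measurable f) (α : ℝ) (hα : α ∈ Set.Ioo (0 : ℝ) 1)
    -- the calibration residuals `V i = |Y i - f (X i)|`, `i = 1, …, n`
    (V : Fin n → Ω → ℝ) (hV : ∀ i ω, V i ω = |Y i.castSucc ω - f (X i.castSucc ω)|)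
    -- `q̂` is the `⌈(1-α)(n+1)⌉`-th smallest of `V_1, …, V_n`, or `+∞` if that index exceeds `n`
    (qhat : Ω → EReal)
    (hq : ∀ ω, qhat ω =
      (((Finset.univ.val.map fun i : Fin n => V i ω).sort (· ≤ ·)).map
          (fun x : ℝ => (x : EReal))).getD (⌈(1 - α) * (n + 1 : ℝ)⌉.toNat - 1) ⊤) :
    ENNReal.ofReal (1 - α) ≤
      ℙ {ω | ((|Y (Fin.last n) ω - f (X (Fin.last n) ω)| : ℝ) : EReal) ≤ qhat ω} := by
  classical
  obtain ⟨hα0, hα1⟩ := hα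
  set k : ℕ := ⌈(1 - α) * (n + 1 : ℝ)⌉.toNat with hkdef
  have hx0 : (0:ℝ) < (1 - α) * (n + 1 : ℝ) := by
    apply mul_pos (by linarith) (by positivity)
  have hceil0 : 0 < ⌈(1 - α) * (n + 1 : ℝ)⌉ := Int.ceil_pos.mpr hx0
  have hk1 : 1 ≤ k := by omega
  have hkx : (1 - α) * (n + 1 : ℝ) ≤ (k : ℝ) := by
    have h1 := Int.le_ceil ((1 - α) * (n + 1 : ℝ))
    have h2 : ((⌈(1 - α) * (n + 1 : ℝ)⌉ : ℤ) : ℝ) = (k : ℝ) := by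
      have h3 : ((k : ℕ) : ℤ) = ⌈(1 - α) * (n + 1 : ℝ)⌉ := Int.toNat_of_nonneg (le_of_lt hceil0)
      exact_mod_cast h3.symm
    linarith
  have hkn1 : k ≤ n + 1 := by
    have h1 : ⌈(1 - α) * (n + 1 : ℝ)⌉ ≤ (n + 1 : ℤ) := by
      apply Int.ceil_le.mpr
      push_cast
      nlinarith
    omega
  -- the sorted-list length is n
  have hMcard : ∀ ω, (Multiset.map (fun i : Fin n => V i ω) Finset.univ.val).card = n := by
    intro ω; simp
  by_cases hkn : k ≤ n
  · -- main case
    set vecf : Ω → (Fin (n+1) → 𝒳 × ℝ) := fun ω i => (X i ω, Y i ω) with hvecdef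
    have hvecm : Measurable vecf := measurable_pi_lambda _ hmeas
    set r : (Fin (n+1) → 𝒳 × ℝ) → Fin (n+1) → ℝ := fun p i => |(p i).2 - f (p i).1| with hrdef
    have hrm : ∀ i, Measurable fun p => r p i := fun i =>
      ((measurable_snd.comp (measurable_pi_apply i)).sub
        (hf.comp (measurable_fst.comp (measurable_pi_apply i)))).abs
    set S : Fin (n+1) → Set (Fin (n+1) → 𝒳 × ℝ) :=
      fun j => {p | (Finset.univ.filter fun i => r p i < r p j).card < k} with hSdef
    have hcardm : ∀ j, Measurable fun p => (Finset.univ.filter fun i => r p i < r p j).card := by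
      intro j
      have heq : (fun p => (Finset.univ.filter fun i => r p i < r p j).card)
          = fun p => ∑ i, if r p i < r p j then 1 else 0 := by
        funext p; rw [Finset.card_filter]
      rw [heq]
      exact Finset.measurable_sum _ (fun i _ =>
        Measurable.ite (measurableSet_lt (hrm i) (hrm j)) measurable_const measurable_const)
    have hSm : ∀ j, MeasurableSet (S j) := by
      intro j
      exact (hcardm j) (measurableSet_Iio (a := k))
    set μ : Measure (Fin (n+1) → 𝒳 × ℝ) := Measure.map vecf ℙ with hμdef
    have hμprob : IsProbabilityMeasure μ := Measure.isProbabilityMeasure_map hvecm.aemeasurable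
    -- Step A : all S j have the same measure
    have hμeq : ∀ j, μ (S j) = μ (S (Fin.last n)) := by
      intro j
      set σ := Equiv.swap j (Fin.last n) with hσdef
      have hperm : Measurable fun (p : Fin (n+1) → 𝒳 × ℝ) => p ∘ σ :=
        measurable_pi_lambda _ fun i => measurable_pi_apply (σ i)
      have h1 : Measure.map (fun p : Fin (n+1) → 𝒳 × ℝ => p ∘ σ) μ = μ := by
        rw [hμdef, Measure.map_map hperm hvecm]
        have : ((fun p : Fin (n+1) → 𝒳 × ℝ => p ∘ σ) ∘ vecf)
            = fun ω i => (X (σ i) ω, Y (σ i) ω) := rfl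
        rw [this, hexch σ]
      have h2 : (fun p : Fin (n+1) → 𝒳 × ℝ => p ∘ σ) ⁻¹' S (Fin.last n) = S j := by
        ext p
        simp only [Set.mem_preimage, hSdef, Set.mem_setOf_eq]
        have hre : (Finset.univ.filter fun i => r (p ∘ σ) i < r (p ∘ σ) (Fin.last n)).card
            = (Finset.univ.filter fun i => r p i < r p (σ (Fin.last n))).card :=
          aux_card_reindex σ (fun i => r p i < r p (σ (Fin.last n)))
        rw [hre, hσdef, Equiv.swap_apply_right]
      calc μ (S j) = μ ((fun p : Fin (n+1) → 𝒳 × ℝ => p ∘ σ) ⁻¹' S (Fin.last n)) := by rw [h2]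
        _ = (Measure.map (fun p : Fin (n+1) → 𝒳 × ℝ => p ∘ σ) μ) (S (Fin.last n)) :=
            (Measure.map_apply hperm (hSm _)).symm
        _ = μ (S (Fin.last n)) := by rw [h1]
    -- Step C : sum bound
    have hsum : (k : ENNReal) ≤ ∑ j, μ (S j) := by
      have hpt : ∀ p, (k : ENNReal) ≤ ∑ j, (S j).indicator (fun _ => (1:ENNReal)) p := by
        intro p
        have hcard := aux_rank (fun i => r p i) k hkn1
        have heq : ∑ j, (S j).indicator (fun _ => (1:ENNReal)) p
            = ((Finset.univ.filter fun j : Fin (n+1) =>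
                (Finset.univ.filter fun i => r p i < r p j).card < k).card : ENNReal) := by
          rw [Finset.card_filter]
          push_cast
          apply Finset.sum_congr rfl
          intro j _
          by_cases hj : p ∈ S j
          · rw [Set.indicator_of_mem hj]
            simp only [hSdef, Set.mem_setOf_eq] at hj
            rw [if_pos hj]
          · rw [Set.indicator_of_notMem hj]
            simp only [hSdef, Set.mem_setOf_eq] at hj
            rw [if_neg hj]
        rw [heq]
        exact_mod_cast hcard
      calc (k : ENNReal) = ∫⁻ _, (k : ENNReal) ∂μ := by
            rw [lintegral_const, measure_univ, mul_one]
        _ ≤ ∫⁻ p, ∑ j, (S j).indicator (fun _ => (1:ENNReal)) p ∂μ := lintegral_mono hpt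
        _ = ∑ j, ∫⁻ p, (S j).indicator (fun _ => (1:ENNReal)) p ∂μ :=
            lintegral_finset_sum _ (fun j _ => (measurable_const.indicator (hSm j)))
        _ = ∑ j, μ (S j) := by
            apply Finset.sum_congr rfl
            intro j _
            rw [lintegral_indicator_const (hSm j), one_mul]
    have hfinal : (k : ENNReal) ≤ (n + 1 : ℕ) * μ (S (Fin.last n)) := by
      calc (k : ENNReal) ≤ ∑ j, μ (S j) := hsum
        _ = ∑ _j : Fin (n+1), μ (S (Fin.last n)) := Finset.sum_congr rfl (fun j _ => hμeq j)
        _ = (n + 1 : ℕ) * μ (S (Fin.last n)) := by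
            rw [Finset.sum_const, Finset.card_univ, Fintype.card_fin, nsmul_eq_mul]
    have hlb : ENNReal.ofReal (1 - α) ≤ μ (S (Fin.last n)) := by
      rw [← ENNReal.mul_le_mul_iff_left (a := ENNReal.ofReal (1-α)) (b := μ (S (Fin.last n)))
        (c := ((n + 1 : ℕ) : ENNReal)) (by simp) (by simp)]
      calc ENNReal.ofReal (1 - α) * ((n + 1 : ℕ) : ENNReal)
          = ENNReal.ofReal ((1 - α) * ((n + 1 : ℕ) : ℝ)) := by
            rw [ENNReal.ofReal_mul (by linarith), ENNReal.ofReal_natCast]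
        _ ≤ ENNReal.ofReal ((k : ℕ) : ℝ) := by
            apply ENNReal.ofReal_le_ofReal
            push_cast
            linarith
        _ = (k : ENNReal) := ENNReal.ofReal_natCast k
        _ ≤ ((n + 1 : ℕ) : ENNReal) * μ (S (Fin.last n)) := hfinal
        _ = μ (S (Fin.last n)) * ((n + 1 : ℕ) : ENNReal) := mul_comm _ _
    -- event inclusion
    have hincl : vecf ⁻¹' S (Fin.last n) ⊆
        {ω | ((|Y (Fin.last n) ω - f (X (Fin.last n) ω)| : ℝ) : EReal) ≤ qhat ω} := by
      intro ω hω
      simp only [Set.mem_preimage, hSdef, Set.mem_setOf_eq] at hω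
      set t := |Y (Fin.last n) ω - f (X (Fin.last n) ω)| with htdef
      have hrt : r (vecf ω) (Fin.last n) = t := rfl
      have hsmall : (Finset.univ.filter fun i : Fin n => V i ω < t).card < k := by
        refine lt_of_le_of_lt ?_ hω
        apply Finset.card_le_card_of_injOn (fun i => Fin.castSucc i)
        · intro i hi
          simp only [Finset.mem_coe, Finset.mem_filter, Finset.mem_univ, true_and] at hi ⊢
          rw [hV i ω] at hi
          rw [hrt]
          exact hi
        · intro a _ b _ h
          exact Fin.castSucc_injective n h
      set M := (Finset.univ.val.map fun i : Fin n => V i ω) with hMdef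
      set L := M.sort (· ≤ ·) with hLdef
      have hLlen : L.length = n := by
        rw [hLdef, Multiset.length_sort]
        exact hMcard ω
      have hcount : L.countP (fun x => decide (x < t)) < k := by
        have h1 : Multiset.countP (fun x => x < t) M
            = (Finset.univ.filter fun i : Fin n => V i ω < t).card := by
          rw [hMdef, Multiset.countP_map]
          rfl
        have h2 : Multiset.countP (fun x => x < t) (↑L) = L.countP (fun x => decide (x < t)) := by
          simp [Multiset.coe_countP]
        rw [← h2, hLdef, Multiset.sort_eq, ← hLdef, h1] at *
        omega
      have hidx : k - 1 < L.length := by omega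
      have hts : t ≤ L[k-1] := aux_sorted (Multiset.pairwise_sort _ _) hk1 hidx hcount
      rw [Set.mem_setOf_eq, hq ω]
      have hlen2 : k - 1 < ((M.sort (· ≤ ·)).map (fun x : ℝ => (x : EReal))).length := by
        rw [List.length_map, ← hLdef, hLlen]; omega
      rw [List.getD_eq_getElem _ _ hlen2, List.getElem_map]
      exact_mod_cast hts
    calc ENNReal.ofReal (1 - α) ≤ μ (S (Fin.last n)) := hlb
      _ = ℙ (vecf ⁻¹' S (Fin.last n)) := Measure.map_apply hvecm (hSm _)
      _ ≤ ℙ {ω | ((|Y (Fin.last n) ω - f (X (Fin.last n) ω)| : ℝ) : EReal) ≤ qhat ω} :=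
          measure_mono hincl
  · -- degenerate case k > n : qhat = ⊤
    have huniv : {ω | ((|Y (Fin.last n) ω - f (X (Fin.last n) ω)| : ℝ) : EReal) ≤ qhat ω}
        = Set.univ := by
      apply Set.eq_univ_of_forall
      intro ω
      rw [Set.mem_setOf_eq, hq ω, List.getD_eq_default]
      · exact le_top
      · rw [List.length_map, Multiset.length_sort, hMcard ω]
        omega
    rw [huniv, measure_univ]
    exact ENNReal.ofReal_le_one.mpr (by linarith)
end

section
/- Design-based conformal coverage under PPS sampling with replacement: With S_1,...,S_n iid Categorical(π) on a finite population {1,...,N} (π_j > 0 for all j) and S_{n+1} uniform on {1,...,N} independent, using inverse-probability weights w(S_i) = 1/π_{S_i} in the weighted conformal prediction set Ĉ_n, we have P(Y_{S_{n+1}} ∈ Ĉ_n(X_{S_{n+1}})) ≥ 1 − α. -/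
open MeasureTheory ProbabilityTheory

open scoped Classical in
/-- `Quantile(β; F)` for the discrete distribution on the extended reals putting
mass `p i` at `v i`: the generalized inverse CDF `inf { y : F(-∞, y] ≥ β }`. -/
noncomputable def wquantile {m : ℕ} (β : ℝ) (p : Fin m → ℝ) (v : Fin m → EReal) : EReal :=
  sInf {y : EReal | β ≤ ∑ i, if v i ≤ y then p i else 0}

open scoped Classical

section Aux

lemma aux_map_univ {α : Type*} (m : ℕ) (g : Fin m → α) :
    (Finset.univ.val.map g) = ∑ i : Fin m, ({g i} : Multiset α) := by
  rw [← Finset.sum_multiset_singleton]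
  induction (Finset.univ : Finset (Fin m)) using Finset.induction with
  | empty => simp
  | @insert a s h ih => rw [Finset.sum_insert h, Finset.sum_insert h, Multiset.map_add, ih]; simp

lemma aux_map_decomp {α : Type*} (m : ℕ) (g : Fin (m+1) → α) :
    ((Finset.univ.val.map fun j : Fin m => g j.castSucc) + {g (Fin.last m)}) =
      Finset.univ.val.map g := by
  rw [aux_map_univ, aux_map_univ, Fin.sum_univ_castSucc]

lemma aux_map_perm {α : Type*} (m : ℕ) (g : Fin m → α) (e : Fin m ≃ Fin m) :
    (Finset.univ.val.map fun i => g (e i)) = Finset.univ.val.map g := by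
  rw [aux_map_univ, aux_map_univ]
  exact Equiv.sum_comp e (fun i => ({g i} : Multiset α))

lemma aux_quantile_le_iff {m : ℕ} {β : ℝ} (hβ : 0 < β) {p : Fin m → ℝ} (hp : ∀ i, 0 ≤ p i)
    (v : Fin m → EReal) (c : ℝ) :
    ((c : ℝ) : EReal) ≤ wquantile β p v ↔ (∑ i, if v i < (c : EReal) then p i else 0) < β := by
  unfold wquantile
  rw [le_sInf_iff]
  constructor
  · intro h
    by_contra hge
    push_neg at hge
    set y := (Finset.univ.filter fun i => v i < (c : EReal)).sup v with hy
    have hylt : y < (c : EReal) := by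
      refine (Finset.sup_lt_iff (EReal.bot_lt_coe c)).2 fun b hb => (Finset.mem_filter.1 hb).2
    have hmem : β ≤ ∑ i, if v i ≤ y then p i else 0 := by
      refine le_trans hge (Finset.sum_le_sum fun i _ => ?_)
      split_ifs with h1 h2 h2
      · exact le_refl _
      · exact absurd (Finset.le_sup (f := v) (Finset.mem_filter.2 ⟨Finset.mem_univ i, h1⟩)) h2
      · exact hp i
      · exact le_refl _
    exact absurd (h y hmem) (not_le.2 hylt)
  · intro h y hy
    simp only [Set.mem_setOf_eq] at hy
    by_contra hcy
    push_neg at hcy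
    have hle : (∑ i, if v i ≤ y then p i else 0) ≤ ∑ i, if v i < (c : EReal) then p i else 0 := by
      refine Finset.sum_le_sum fun i _ => ?_
      split_ifs with h1 h2 h2
      · exact le_refl _
      · exact absurd (lt_of_le_of_lt h1 hcy) h2
      · exact hp i
      · exact le_refl _
    linarith

lemma aux_weighted_rank {m : ℕ} {α : ℝ} (hα0 : 0 ≤ α) (w u : Fin (m+1) → ℝ)
    (hw : ∀ i, 0 < w i) :
    (1 - α) * ∑ i, w i ≤
      ∑ k, if (∑ i, if u i < u k then w i else 0) < (1 - α) * ∑ i, w i then w k else 0 := by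
  set W := ∑ i, w i with hW
  have hW0 : 0 ≤ W := Finset.sum_nonneg fun i _ => (hw i).le
  set A := Finset.univ.filter
    (fun k => ¬ ((∑ i, if u i < u k then w i else 0) < (1 - α) * W)) with hA
  have key : ∑ k ∈ A, w k ≤ α * W := by
    rcases A.eq_empty_or_nonempty with hAe | hAne
    · rw [hAe]; simp; positivity
    · obtain ⟨k0, hk0A, hk0min⟩ := A.exists_min_image u hAne
      have hk0 : (1 - α) * W ≤ ∑ i, if u i < u k0 then w i else 0 :=
        not_lt.1 (Finset.mem_filter.1 hk0A).2
      have hsub : ∑ k ∈ A, w k ≤ ∑ i, if u i < u k0 then 0 else w i := by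
        rw [show (∑ i, if u i < u k0 then 0 else w i)
            = ∑ i ∈ Finset.univ.filter (fun i => ¬ (u i < u k0)), w i by
          rw [Finset.sum_filter]; exact Finset.sum_congr rfl fun i _ => by split_ifs <;> simp_all]
        refine Finset.sum_le_sum_of_subset_of_nonneg ?_ fun i _ _ => (hw i).le
        intro k hk
        refine Finset.mem_filter.2 ⟨Finset.mem_univ _, not_lt.2 (hk0min k hk)⟩
      have hsplit : (∑ i, if u i < u k0 then w i else 0) + (∑ i, if u i < u k0 then 0 else w i)
          = W := by
        rw [← Finset.sum_add_distrib]
        exact Finset.sum_congr rfl fun i _ => by split_ifs <;> ring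
      linarith
  have hsplit2 : (∑ k, if (∑ i, if u i < u k then w i else 0) < (1 - α) * W then w k else 0)
      = W - ∑ k ∈ A, w k := by
    rw [hA, Finset.sum_filter]
    rw [eq_sub_iff_add_eq, ← Finset.sum_add_distrib]
    exact Finset.sum_congr rfl fun k _ => by split_ifs <;> simp_all
  linarith

/-- nonconformity score of the `i`-th point of the augmented sample determined by `t`. -/
noncomputable def auxsc {𝒳 : Type*} {N n : ℕ} (X : Fin N → 𝒳) (Y : Fin N → ℝ)
    (Sc : 𝒳 × ℝ → Multiset (𝒳 × ℝ) → ℝ) (t : Fin (n+1) → Fin N) (i : Fin (n+1)) : ℝ :=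
  Sc (X (t i), Y (t i)) (Finset.univ.val.map fun k => (X (t k), Y (t k)))

/-- the coverage event, expressed through weighted ranks. -/
def auxP {𝒳 : Type*} {N n : ℕ} (X : Fin N → 𝒳) (Y : Fin N → ℝ) (π : Fin N → ℝ)
    (Sc : 𝒳 × ℝ → Multiset (𝒳 × ℝ) → ℝ) (α : ℝ) (t : Fin (n+1) → Fin N) : Prop :=
  (∑ i, if auxsc X Y Sc t i < auxsc X Y Sc t (Fin.last n) then 1 / π (t i) else 0)
    < (1 - α) * ∑ i, 1 / π (t i)

/-- probability mass of the sample path `t`. -/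
noncomputable def auxq {N n : ℕ} (π : Fin N → ℝ) (t : Fin (n+1) → Fin N) : ℝ :=
  (N : ℝ)⁻¹ * ∏ j : Fin n, π (t j.castSucc)

/-- the symmetrized mass. -/
noncomputable def auxc {N n : ℕ} (π : Fin N → ℝ) (t : Fin (n+1) → Fin N) : ℝ :=
  (N : ℝ)⁻¹ * ∏ i : Fin (n+1), π (t i)

lemma aux_event {𝒳 : Type*} {N : ℕ} (X : Fin N → 𝒳) (Y : Fin N → ℝ)
    (π : Fin N → ℝ) (hπ : ∀ j, 0 < π j) {n : ℕ}
    (Sc : 𝒳 × ℝ → Multiset (𝒳 × ℝ) → ℝ) {α : ℝ} (hβ : 0 < 1 - α)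
    (t : Fin (n+1) → Fin N) :
    ((Sc (X (t (Fin.last n)), Y (t (Fin.last n)))
        ((Finset.univ.val.map fun j : Fin n => (X (t j.castSucc), Y (t j.castSucc)))
          + {(X (t (Fin.last n)), Y (t (Fin.last n)))}) : ℝ) : EReal) ≤
      wquantile (1 - α)
        (fun i : Fin (n + 1) =>
          (if h : (i : ℕ) < n then 1 / π (t (Fin.castSucc ⟨i, h⟩)) else 1 / π (t (Fin.last n))) /
            ((∑ j : Fin n, 1 / π (t j.castSucc)) + 1 / π (t (Fin.last n))))
        (fun i : Fin (n + 1) =>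
          if h : (i : ℕ) < n then
            ((Sc (X (t (Fin.castSucc ⟨i, h⟩)), Y (t (Fin.castSucc ⟨i, h⟩)))
              ((Finset.univ.val.map fun j : Fin n => (X (t j.castSucc), Y (t j.castSucc)))
                + {(X (t (Fin.last n)), Y (t (Fin.last n)))}) : ℝ) : EReal)
          else ⊤)
      ↔ auxP X Y π Sc α t := by
  unfold auxP auxsc
  have hM := aux_map_decomp n (fun i => (X (t i), Y (t i)))
  rw [hM]
  set D : ℝ := (∑ j : Fin n, 1 / π (t j.castSucc)) + 1 / π (t (Fin.last n)) with hD
  have hDW : D = ∑ i, 1 / π (t i) := (Fin.sum_univ_castSucc fun i => 1 / π (t i)).symm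
  have hDpos : 0 < D := by
    rw [hDW]
    exact Finset.sum_pos (fun i _ => one_div_pos.2 (hπ _)) Finset.univ_nonempty
  have hp : ∀ i : Fin (n+1),
      0 ≤ (if h : (i : ℕ) < n then 1 / π (t (Fin.castSucc ⟨i, h⟩))
        else 1 / π (t (Fin.last n))) / D := by
    intro i
    apply div_nonneg _ hDpos.le
    split_ifs <;> exact le_of_lt (one_div_pos.2 (hπ _))
  rw [aux_quantile_le_iff hβ hp]
  have hper : ∀ i : Fin (n+1),
      (if (if h : (i : ℕ) < n then
            ((Sc (X (t (Fin.castSucc ⟨i, h⟩)), Y (t (Fin.castSucc ⟨i, h⟩)))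
              (Finset.univ.val.map fun k => (X (t k), Y (t k))) : ℝ) : EReal)
          else ⊤) < ((Sc (X (t (Fin.last n)), Y (t (Fin.last n)))
              (Finset.univ.val.map fun k => (X (t k), Y (t k))) : ℝ) : EReal) then
        (if h : (i : ℕ) < n then 1 / π (t (Fin.castSucc ⟨i, h⟩)) else 1 / π (t (Fin.last n))) / D
      else 0)
      = (if Sc (X (t i), Y (t i)) (Finset.univ.val.map fun k => (X (t k), Y (t k)))
            < Sc (X (t (Fin.last n)), Y (t (Fin.last n)))
              (Finset.univ.val.map fun k => (X (t k), Y (t k)))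
         then 1 / π (t i) else 0) / D := by
    intro i
    rcases Nat.lt_or_ge (i : ℕ) n with h | h
    · have hci : Fin.castSucc ⟨(i : ℕ), h⟩ = i := Fin.ext rfl
      rw [dif_pos h, dif_pos h, hci]
      simp only [EReal.coe_lt_coe_iff]
      split_ifs <;> simp
    · have hil : i = Fin.last n := Fin.ext (Nat.le_antisymm (Nat.lt_succ_iff.1 i.isLt) h)
      have hnl : ¬ ((i : ℕ) < n) := by omega
      rw [dif_neg hnl, dif_neg hnl, if_neg (not_top_lt), hil, if_neg (lt_irrefl _), zero_div]
  rw [Finset.sum_congr rfl fun i _ => hper i, ← Finset.sum_div, div_lt_iff₀ hDpos, hDW,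
    mul_comm]

lemma aux_sum_comp_perm {M : Type*} [AddCommMonoid M] {k N : ℕ}
    (G : (Fin k → Fin N) → M) (e : Fin k ≃ Fin k) :
    (∑ t : Fin k → Fin N, G (t ∘ e)) = ∑ t : Fin k → Fin N, G t := by
  apply Fintype.sum_bijective (fun t : Fin k → Fin N => t ∘ e)
  · constructor
    · intro a b hab
      funext i
      simpa using congrFun hab (e.symm i)
    · intro t
      exact ⟨t ∘ e.symm, by funext i; simp⟩
  · intro t; rfl

lemma aux_main_sum {𝒳 : Type*} {N n : ℕ} (hN : 0 < N) (X : Fin N → 𝒳) (Y : Fin N → ℝ)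
    (π : Fin N → ℝ) (hπ : ∀ j, 0 < π j) (hπsum : ∑ j, π j = 1)
    (Sc : 𝒳 × ℝ → Multiset (𝒳 × ℝ) → ℝ) {α : ℝ} (hα0 : 0 < α) (hα1 : α < 1) :
    1 - α ≤ ∑ t : Fin (n+1) → Fin N, if auxP X Y π Sc α t then auxq π t else 0 := by
  have hNne : (N : ℝ) ≠ 0 := Nat.cast_ne_zero.2 hN.ne'
  have hcpos : ∀ t : Fin (n+1) → Fin N, 0 < auxc π t := fun t =>
    mul_pos (by positivity) (Finset.prod_pos fun i _ => hπ _)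
  have hqc : ∀ t : Fin (n+1) → Fin N, auxq π t = auxc π t * (1 / π (t (Fin.last n))) := by
    intro t
    unfold auxq auxc
    rw [Fin.prod_univ_castSucc (fun i => π (t i))]
    have hne : π (t (Fin.last n)) ≠ 0 := (hπ _).ne'
    field_simp
  have hscperm : ∀ (t : Fin (n+1) → Fin N) (e : Fin (n+1) ≃ Fin (n+1)) (i : Fin (n+1)),
      auxsc X Y Sc (t ∘ e) i = auxsc X Y Sc t (e i) := by
    intro t e i
    unfold auxsc
    have := aux_map_perm (n+1) (fun k => (X (t k), Y (t k))) e
    simp only [Function.comp_apply, this]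
  have hcperm : ∀ (t : Fin (n+1) → Fin N) (e : Fin (n+1) ≃ Fin (n+1)),
      auxc π (t ∘ e) = auxc π t := by
    intro t e
    unfold auxc
    congr 1
    exact Equiv.prod_comp e (fun i => π (t i))
  have hPs : ∀ (t : Fin (n+1) → Fin N) (k : Fin (n+1)),
      auxP X Y π Sc α (t ∘ Equiv.swap k (Fin.last n)) ↔
        (∑ i, if auxsc X Y Sc t i < auxsc X Y Sc t k then 1 / π (t i) else 0)
          < (1 - α) * ∑ i, 1 / π (t i) := by
    intro t k
    unfold auxP
    rw [hscperm t (Equiv.swap k (Fin.last n)) (Fin.last n), Equiv.swap_apply_right]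
    constructor <;> intro h
    · calc (∑ i, if auxsc X Y Sc t i < auxsc X Y Sc t k then 1 / π (t i) else 0)
          = ∑ i, if auxsc X Y Sc t (Equiv.swap k (Fin.last n) i) < auxsc X Y Sc t k
              then 1 / π (t (Equiv.swap k (Fin.last n) i)) else 0 :=
            (Equiv.sum_comp (Equiv.swap k (Fin.last n))
              (fun i => if auxsc X Y Sc t i < auxsc X Y Sc t k then 1 / π (t i) else 0)).symm
        _ = ∑ i, if auxsc X Y Sc (t ∘ Equiv.swap k (Fin.last n)) i < auxsc X Y Sc t k
              then 1 / π ((t ∘ Equiv.swap k (Fin.last n)) i) else 0 := by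
            refine Finset.sum_congr rfl fun i _ => ?_
            rw [hscperm]
            rfl
        _ < (1 - α) * ∑ i, 1 / π ((t ∘ Equiv.swap k (Fin.last n)) i) := h
        _ = (1 - α) * ∑ i, 1 / π (t i) := by
            congr 1
            exact Equiv.sum_comp (Equiv.swap k (Fin.last n)) (fun i => 1 / π (t i))
    · calc (∑ i, if auxsc X Y Sc (t ∘ Equiv.swap k (Fin.last n)) i < auxsc X Y Sc t k
              then 1 / π ((t ∘ Equiv.swap k (Fin.last n)) i) else 0)
          = ∑ i, if auxsc X Y Sc t (Equiv.swap k (Fin.last n) i) < auxsc X Y Sc t k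
              then 1 / π (t (Equiv.swap k (Fin.last n) i)) else 0 := by
            refine Finset.sum_congr rfl fun i _ => ?_
            rw [hscperm]
            rfl
        _ = ∑ i, if auxsc X Y Sc t i < auxsc X Y Sc t k then 1 / π (t i) else 0 :=
            Equiv.sum_comp (Equiv.swap k (Fin.last n))
              (fun i => if auxsc X Y Sc t i < auxsc X Y Sc t k then 1 / π (t i) else 0)
        _ < (1 - α) * ∑ i, 1 / π (t i) := h
        _ = (1 - α) * ∑ i, 1 / π ((t ∘ Equiv.swap k (Fin.last n)) i) := by
            congr 1
            exact (Equiv.sum_comp (Equiv.swap k (Fin.last n)) (fun i => 1 / π (t i))).symm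
  have hrank : ∀ t : Fin (n+1) → Fin N,
      (1 - α) * ∑ i, 1 / π (t i) ≤
        ∑ k, if auxP X Y π Sc α (t ∘ Equiv.swap k (Fin.last n)) then 1 / π (t k) else 0 := by
    intro t
    refine le_trans (aux_weighted_rank hα0.le (fun i => 1 / π (t i)) (fun i => auxsc X Y Sc t i)
      (fun i => one_div_pos.2 (hπ _))) (le_of_eq ?_)
    exact Finset.sum_congr rfl fun k _ => if_congr (hPs t k).symm rfl rfl
  have hone : ∀ k : Fin (n+1), (∑ t : Fin (n+1) → Fin N, auxc π t * (1 / π (t k))) = 1 := by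
    intro k
    have hterm : ∀ t : Fin (n+1) → Fin N,
        auxc π t * (1 / π (t k)) = (N : ℝ)⁻¹ * ∏ i, (if i = k then (1:ℝ) else π (t i)) := by
      intro t
      unfold auxc
      rw [← Finset.mul_prod_erase Finset.univ (fun i => π (t i)) (Finset.mem_univ k),
        ← Finset.mul_prod_erase Finset.univ (fun i => if i = k then (1:ℝ) else π (t i))
          (Finset.mem_univ k),
        if_pos rfl,
        Finset.prod_congr rfl (fun i hi => if_neg (Finset.ne_of_mem_erase hi))]
      have hne : π (t k) ≠ 0 := (hπ _).ne'
      field_simp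
    rw [Finset.sum_congr rfl fun t _ => hterm t, ← Finset.mul_sum]
    have hps := Fintype.prod_sum (fun (i : Fin (n+1)) (j : Fin N) => if i = k then (1:ℝ) else π j)
    rw [← hps]
    have hfac : ∀ i : Fin (n+1),
        (∑ j : Fin N, if i = k then (1:ℝ) else π j) = if i = k then (N : ℝ) else 1 := by
      intro i
      split_ifs with h
      · simp
      · exact hπsum
    rw [Finset.prod_congr rfl fun i _ => hfac i,
      Finset.prod_ite_eq' Finset.univ k (fun _ => (N : ℝ))]
    simp [hNne]
  have hWsum : (∑ t : Fin (n+1) → Fin N, auxc π t * ∑ i, 1 / π (t i)) = ((n : ℝ) + 1) := by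
    rw [Finset.sum_congr rfl fun t _ =>
        Finset.mul_sum Finset.univ (fun i => 1 / π (t i)) (auxc π t),
      Finset.sum_comm, Finset.sum_congr rfl fun k _ => hone k]
    simp [Finset.card_univ]
  have hpos : (0 : ℝ) < (n : ℝ) + 1 := by positivity
  rw [← mul_le_mul_iff_right₀ hpos]
  calc ((n : ℝ) + 1) * (1 - α) = (1 - α) * ∑ t, auxc π t * ∑ i, 1 / π (t i) := by
        rw [hWsum]; ring
    _ = ∑ t, auxc π t * ((1 - α) * ∑ i, 1 / π (t i)) := by
        rw [Finset.mul_sum]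
        exact Finset.sum_congr rfl fun t _ => by ring
    _ ≤ ∑ t, auxc π t * ∑ k, (if auxP X Y π Sc α (t ∘ Equiv.swap k (Fin.last n))
          then 1 / π (t k) else 0) :=
        Finset.sum_le_sum fun t _ => mul_le_mul_of_nonneg_left (hrank t) (hcpos t).le
    _ = ∑ t, ∑ k, (if auxP X Y π Sc α (t ∘ Equiv.swap k (Fin.last n))
          then auxc π t * (1 / π (t k)) else 0) := by
        refine Finset.sum_congr rfl fun t _ => ?_
        rw [Finset.mul_sum]
        exact Finset.sum_congr rfl fun k _ => by rw [mul_ite, mul_zero]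
    _ = ∑ k : Fin (n+1), ∑ t, (if auxP X Y π Sc α (t ∘ Equiv.swap k (Fin.last n))
          then auxc π t * (1 / π (t k)) else 0) := Finset.sum_comm
    _ = ∑ k : Fin (n+1), ∑ t, (if auxP X Y π Sc α (t ∘ Equiv.swap k (Fin.last n))
          then auxq π (t ∘ Equiv.swap k (Fin.last n)) else 0) := by
        refine Finset.sum_congr rfl fun k _ => Finset.sum_congr rfl fun t _ => ?_
        rw [hqc, hcperm]
        congr 2
        simp [Equiv.swap_apply_right]
    _ = ∑ k : Fin (n+1), ∑ t, (if auxP X Y π Sc α t then auxq π t else 0) := by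
        refine Finset.sum_congr rfl fun k _ => ?_
        exact aux_sum_comp_perm (fun t => if auxP X Y π Sc α t then auxq π t else 0)
          (Equiv.swap k (Fin.last n))
    _ = ((n : ℝ) + 1) * ∑ t, (if auxP X Y π Sc α t then auxq π t else 0) := by
        rw [Finset.sum_const, Finset.card_univ, Fintype.card_fin, nsmul_eq_mul]
        push_cast; ring

lemma aux_single {N n : ℕ} (hN : 0 < N) (π : Fin N → ℝ) (hπ : ∀ j, 0 < π j)
    (t : Fin (n+1) → Fin N) :
    (Measure.pi fun i : Fin (n + 1) =>
        if i = Fin.last n then Measure.sum fun j : Fin N => ((N : ENNReal))⁻¹ • Measure.dirac j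
        else Measure.sum fun j : Fin N => ENNReal.ofReal (π j) • Measure.dirac j) {t}
      = ENNReal.ofReal (auxq π t) := by
  have h1 : ∀ (c : Fin N → ENNReal) (x : Fin N),
      (Measure.sum fun j : Fin N => c j • Measure.dirac j) {x} = c x := by
    intro c x
    rw [Measure.sum_apply _ (measurableSet_singleton x), tsum_fintype]
    simp only [Measure.smul_apply, Measure.dirac_apply' _ (measurableSet_singleton x),
      Set.indicator_apply, Set.mem_singleton_iff, smul_eq_mul, mul_ite, mul_one, mul_zero,
      Pi.one_apply]
    rw [Finset.sum_ite_eq' Finset.univ x c]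
    simp
  have hfin : ∀ (c : Fin N → ENNReal) (hc : ∀ j, c j ≠ ⊤),
      IsFiniteMeasure (Measure.sum fun j : Fin N => c j • Measure.dirac j) := by
    intro c hc
    constructor
    rw [Measure.sum_apply _ MeasurableSet.univ, tsum_fintype]
    have h2 : ∀ j : Fin N, (c j • Measure.dirac j) Set.univ = c j := by simp
    rw [Finset.sum_congr rfl fun j _ => h2 j]
    exact ENNReal.sum_lt_top.mpr fun j _ => (hc j).lt_top
  haveI : ∀ i : Fin (n+1), IsFiniteMeasure
      ((fun i : Fin (n+1) => if i = Fin.last n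
          then Measure.sum fun j : Fin N => ((N : ENNReal))⁻¹ • Measure.dirac j
          else Measure.sum fun j : Fin N => ENNReal.ofReal (π j) • Measure.dirac j) i) := by
    intro i
    by_cases h : i = Fin.last n
    · simp only [if_pos h]
      exact hfin _ fun j => by simp [hN.ne']
    · simp only [if_neg h]
      exact hfin _ fun j => ENNReal.ofReal_ne_top
  rw [← Set.univ_pi_singleton t, Measure.pi_pi]
  have hfac : ∀ i : Fin (n+1),
      ((if i = Fin.last n
          then Measure.sum fun j : Fin N => ((N : ENNReal))⁻¹ • Measure.dirac j
          else Measure.sum fun j : Fin N =>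
            ENNReal.ofReal (π j) • Measure.dirac j) : Measure (Fin N)) {t i}
        = (if i = Fin.last n then ((N : ENNReal))⁻¹ else ENNReal.ofReal (π (t i))) := by
    intro i
    split_ifs with h
    · exact h1 _ _
    · exact h1 _ _
  rw [Finset.prod_congr rfl fun i _ => hfac i, Fin.prod_univ_castSucc
    (fun i => if i = Fin.last n then ((N : ENNReal))⁻¹ else ENNReal.ofReal (π (t i)))]
  rw [if_pos rfl, Finset.prod_congr rfl
    (fun (j : Fin n) _ => if_neg (Fin.castSucc_lt_last j).ne)]
  rw [← ENNReal.ofReal_prod_of_nonneg (fun j _ => (hπ (t j.castSucc)).le)]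
  rw [show ((N : ENNReal))⁻¹ = ENNReal.ofReal ((N : ℝ)⁻¹) by
    rw [ENNReal.ofReal_inv_of_pos (by exact_mod_cast hN), ENNReal.ofReal_natCast]]
  rw [← ENNReal.ofReal_mul (Finset.prod_nonneg fun j _ => (hπ (t j.castSucc)).le)]
  unfold auxq
  rw [mul_comm]

end Aux

theorem stmt_11 {Ω 𝒳 : Type*} [MeasurableSpace Ω] [MeasurableSpace 𝒳]
    (Pr : Measure Ω) [IsProbabilityMeasure Pr]
    (N : ℕ) (hN : 0 < N)
    -- fixed population data `(X_j, Y_j)` and positive sampling probabilities `π_j`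
    (X : Fin N → 𝒳) (Y : Fin N → ℝ) (hXY : Measurable fun j => (X j, Y j))
    (π : Fin N → ℝ) (hπ : ∀ j, 0 < π j) (hπsum : ∑ j, π j = 1)
    (n : ℕ) (S : Fin (n + 1) → Ω → Fin N) (hSmeas : ∀ i, Measurable (S i))
    -- `S_1, …, S_n` iid Categorical(π), `S_{n+1}` uniform, all independent
    (hjoint : Measure.map (fun ω i => S i ω) Pr =
      Measure.pi fun i : Fin (n + 1) =>
        if i = Fin.last n then Measure.sum fun j : Fin N => ((N : ENNReal))⁻¹ • Measure.dirac j
        else Measure.sum fun j : Fin N => ENNReal.ofReal (π j) • Measure.dirac j)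
    -- a nonconformity score function symmetric in its multiset argument
    (Sc : 𝒳 × ℝ → Multiset (𝒳 × ℝ) → ℝ)
    (Vxy : Fin n → 𝒳 → ℝ → Ω → ℝ) (Vnew : 𝒳 → ℝ → Ω → ℝ)
    (hVxy : ∀ i x y ω, Vxy i x y ω =
      Sc (X (S i.castSucc ω), Y (S i.castSucc ω))
        ((Finset.univ.val.map fun j : Fin n => (X (S j.castSucc ω), Y (S j.castSucc ω)))
          + {(x, y)}))
    (hVnew : ∀ x y ω, Vnew x y ω =
      Sc (x, y)
        ((Finset.univ.val.map fun j : Fin n => (X (S j.castSucc ω), Y (S j.castSucc ω)))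
          + {(x, y)}))
    (α : ℝ) (hα : α ∈ Set.Ioo (0 : ℝ) 1)
    -- inverse-probability weights `w(S_i) = 1/π_{S_i}`; for a test case at covariate
    -- value `x = X_s` the weight `w(x)` below is instantiated at the test unit itself,
    -- so `Ĉ_n` is indexed by the test unit's id `s`
    (Chat : Ω → Fin N → Set ℝ)
    (hChat : ∀ ω s, Chat ω s =
      {y : ℝ | ((Vnew (X s) y ω : ℝ) : EReal) ≤
        wquantile (1 - α)
          (fun i : Fin (n + 1) =>
            (if h : (i : ℕ) < n then 1 / π (S (Fin.castSucc ⟨i, h⟩) ω) else 1 / π s) /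
              ((∑ j : Fin n, 1 / π (S j.castSucc ω)) + 1 / π s))
          (fun i : Fin (n + 1) =>
            if h : (i : ℕ) < n then ((Vxy ⟨i, h⟩ (X s) y ω : ℝ) : EReal) else ⊤)}) :
    ENNReal.ofReal (1 - α) ≤
      Pr {ω | Y (S (Fin.last n) ω) ∈ Chat ω (S (Fin.last n) ω)} := by
  obtain ⟨hα0, hα1⟩ := hα
  have hβ : (0 : ℝ) < 1 - α := by linarith
  -- Step 1: rewrite the coverage event as a preimage of a set of sample paths
  have hev : {ω | Y (S (Fin.last n) ω) ∈ Chat ω (S (Fin.last n) ω)}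
      = (fun ω i => S i ω) ⁻¹' {t : Fin (n+1) → Fin N | auxP X Y π Sc α t} := by
    ext ω
    simp only [Set.mem_setOf_eq, Set.mem_preimage, hChat, hVnew, hVxy]
    exact aux_event X Y π hπ Sc hβ (fun i => S i ω)
  rw [hev]
  have hTmeas : Measurable fun ω (i : Fin (n+1)) => S i ω :=
    measurable_pi_lambda _ hSmeas
  have hBmeas : MeasurableSet {t : Fin (n+1) → Fin N | auxP X Y π Sc α t} :=
    Set.Finite.measurableSet (Set.toFinite _)
  rw [← Measure.map_apply hTmeas hBmeas, hjoint]
  -- Step 2: compute the product measure of the event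
  set B' : Finset (Fin (n+1) → Fin N) := Finset.univ.filter (fun t => auxP X Y π Sc α t)
    with hB'
  have hBcoe : {t : Fin (n+1) → Fin N | auxP X Y π Sc α t} = ⋃ t ∈ B', {t} := by
    ext s
    simp [hB']
  rw [hBcoe, measure_biUnion_finset ?_ (fun t _ => measurableSet_singleton t)]
  · have hq0 : ∀ t ∈ B', 0 ≤ auxq π t := fun t _ =>
      (mul_nonneg (inv_nonneg.2 (Nat.cast_nonneg N))
        (Finset.prod_nonneg fun j _ => (hπ (t j.castSucc)).le) : 0 ≤ auxq π t)
    rw [Finset.sum_congr rfl fun t _ => aux_single hN π hπ t,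
      ← ENNReal.ofReal_sum_of_nonneg hq0]
    apply ENNReal.ofReal_le_ofReal
    rw [hB', Finset.sum_filter]
    exact aux_main_sum hN X Y π hπ hπsum Sc hα0 hα1
  · intro a _ b _ hab
    simp [Set.disjoint_singleton, hab]
end

section
/- Exact coverage of the exchangeable conformal quantile under no ties: For exchangeable V_1,...,V_{n+1} with no ties almost surely, P(V_{n+1} ≤ Quantile(β; {V_1,...,V_n} ∪ {∞})) = ⌈β(n+1)⌉/(n+1) whenever ⌈β(n+1)⌉ ≤ n, and equals 1 otherwise; in particular this quantity lies in [β, β + 1/(n+1)]. -/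
open MeasureTheory
open scoped ENNReal

lemma getD_sorted_le_iff (a : EReal) :
    ∀ (l : List EReal), l.Pairwise (· ≤ ·) → ∀ m, m < l.length →
      (a ≤ l.getD m ⊤ ↔ l.countP (fun x => x < a) ≤ m) := by
  intro l
  induction l with
  | nil => intro _ m hm; simp at hm
  | cons b t ih =>
    intro hs m hm
    have hbt : ∀ x ∈ t, b ≤ x := fun x hx => (List.pairwise_cons.mp hs).1 x hx
    have hts : t.Pairwise (· ≤ ·) := (List.pairwise_cons.mp hs).2
    cases m with
    | zero =>
      have hg : (b :: t).getD 0 ⊤ = b := rfl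
      rw [hg]
      constructor
      · intro hab
        have h1 : ¬ (b < a) := not_lt.mpr hab
        have h2 : t.countP (fun x => x < a) = 0 := by
          rw [List.countP_eq_zero]
          intro x hx
          simp only [decide_eq_true_eq]
          exact not_lt.mpr (le_trans hab (hbt x hx))
        simp [List.countP_cons, h1, h2]
      · intro h
        by_contra hab
        have hba : b < a := lt_of_not_ge hab
        simp [List.countP_cons, hba] at h
    | succ m =>
      simp only [List.length_cons, Nat.succ_lt_succ_iff] at hm
      have hgd : (b :: t).getD (m+1) ⊤ = t.getD m ⊤ := rfl
      rw [hgd, List.countP_cons]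
      by_cases hba : b < a
      · have h1 : (if (fun x => decide (x < a)) b = true then 1 else 0) = 1 := by simp [hba]
        rw [h1, ih hts m hm]
        omega
      · have hab : a ≤ b := not_lt.mp hba
        have h2 : t.countP (fun x => x < a) = 0 := by
          rw [List.countP_eq_zero]
          intro x hx
          simp only [decide_eq_true_eq]
          exact not_lt.mpr (le_trans hab (hbt x hx))
        have h3 : a ≤ t.getD m ⊤ := by
          rw [ih hts m hm, h2]; omega
        simp [hba, h2]
        simpa [List.getD] using h3

open Classical Finset in
lemma mem_E_iff (n : ℕ) (β : ℝ) (hk1 : 1 ≤ ⌈β * (n + 1 : ℝ)⌉.toNat)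
    (hkn : ⌈β * (n + 1 : ℝ)⌉.toNat ≤ n + 1) (x : ℝ) (f : Fin n → ℝ) :
    ((x : EReal) ≤ mquantile β ((Finset.univ.val.map fun i : Fin n => ((f i : ℝ) : EReal)) + {⊤}))
      ↔ (Finset.univ.filter fun i : Fin n => f i < x).card ≤ ⌈β * (n + 1 : ℝ)⌉.toNat - 1 := by
  set k := ⌈β * (n + 1 : ℝ)⌉.toNat with hk
  set s : Multiset EReal := (Finset.univ.val.map fun i : Fin n => ((f i : ℝ) : EReal)) + {⊤} with hs
  have hcard : Multiset.card s = n + 1 := by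
    simp [hs]
  have hidx : (⌈β * ((Multiset.card s : ℕ) : ℝ)⌉.toNat - 1) = k - 1 := by
    rw [hcard]; push_cast; rfl
  have hlen : k - 1 < (s.sort (· ≤ ·)).length := by
    rw [Multiset.length_sort, hcard]; omega
  rw [mquantile, hidx, getD_sorted_le_iff _ _ (Multiset.pairwise_sort _ _) _ hlen]
  have hb : (s.sort (· ≤ ·)).countP (fun y => y < (x : EReal)) =
      Multiset.countP (fun y => y < (x : EReal)) s := by
    conv_rhs => rw [← Multiset.sort_eq (r := (· ≤ ·)) (s := s)]
    rw [Multiset.coe_countP]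
  rw [hb, hs, Multiset.countP_add, Multiset.countP_map]
  have h1 : Multiset.countP (fun y => y < (x : EReal)) {⊤} = 0 := by
    rw [Multiset.countP_eq_zero]
    intro a ha
    simp only [Multiset.mem_singleton] at ha
    subst ha
    exact fun h => absurd h (by simp)
  rw [h1, add_zero]
  have h2 : (Multiset.card (Multiset.filter (fun i => ((f i : ℝ) : EReal) < (x : EReal)) Finset.univ.val))
      = (Finset.univ.filter fun i : Fin n => f i < x).card := by
    rw [Finset.card]
    congr 1
    apply Multiset.filter_congr
    intro i _
    exact ⟨fun h => by exact_mod_cast h, fun h => by exact_mod_cast h⟩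
  rw [h2]

open Finset in
lemma count_rank_le (n k : ℕ) (hk : k ≤ n + 1) (v : Fin (n+1) → ℝ)
    (hdist : ∀ i j, i ≠ j → v i ≠ v j) :
    (univ.filter fun i => (univ.filter fun j => v j ≤ v i).card ≤ k).card = k := by
  classical
  set f : Fin (n+1) → ℕ := fun i => (univ.filter fun j => v j ≤ v i).card with hf
  have hmono : ∀ i j, v i < v j → f i < f j := by
    intro i j hij
    apply Finset.card_lt_card
    constructor
    · intro l hl
      simp only [mem_filter, mem_univ, true_and] at hl ⊢
      exact le_trans hl hij.le
    · intro hsub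
      have hj : j ∈ univ.filter fun l => v l ≤ v j := by simp
      have := hsub hj
      simp only [mem_filter, mem_univ, true_and] at this
      exact absurd this (not_le.mpr hij)
  have hinj : Function.Injective f := by
    intro i j hij
    by_contra hne
    rcases lt_trichotomy (v i) (v j) with h | h | h
    · exact absurd hij (Nat.ne_of_lt (hmono _ _ h))
    · exact hdist i j hne h
    · exact absurd hij.symm (Nat.ne_of_lt (hmono _ _ h))
  have hrange : ∀ i, f i ∈ Finset.Icc 1 (n+1) := by
    intro i
    rw [mem_Icc]
    constructor
    · rw [hf, Nat.one_le_iff_ne_zero, ← Nat.pos_iff_ne_zero, Finset.card_pos]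
      exact ⟨i, by simp⟩
    · calc (univ.filter fun j => v j ≤ v i).card ≤ (univ : Finset (Fin (n+1))).card :=
          Finset.card_filter_le _ _
      _ = n + 1 := by simp
  have himage : univ.image f = Finset.Icc 1 (n+1) := by
    apply Finset.eq_of_subset_of_card_le
    · intro x hx
      rw [mem_image] at hx
      obtain ⟨i, _, rfl⟩ := hx
      exact hrange i
    · rw [Finset.card_image_of_injective _ hinj, Nat.card_Icc]
      simp
  calc (univ.filter fun i => f i ≤ k).card
      = ((univ.filter fun i => f i ≤ k).image f).card :=
        (Finset.card_image_of_injective _ hinj).symm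
    _ = ((univ.image f).filter (fun x => x ≤ k)).card := by rw [Finset.filter_image]
    _ = (Finset.Icc 1 (n+1) |>.filter (fun x => x ≤ k)).card := by rw [himage]
    _ = (Finset.Icc 1 k).card := by
        congr 1
        ext x
        simp only [mem_filter, mem_Icc]
        omega
    _ = k := by rw [Nat.card_Icc]; omega

open Finset in
lemma card_le_last_eq (n : ℕ) (v : Fin (n+1) → ℝ)
    (hdist : ∀ i : Fin n, v i.castSucc ≠ v (Fin.last n)) :
    (univ.filter fun j => v j ≤ v (Fin.last n)).card
      = (univ.filter fun i : Fin n => v i.castSucc < v (Fin.last n)).card + 1 := by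
  classical
  rw [Fin.univ_castSuccEmb, Finset.filter_cons, if_pos le_rfl, Finset.card_cons,
    Finset.filter_map, Finset.card_map]
  congr 2
  apply Finset.filter_congr
  intro i _
  simp only [Fin.castSuccEmb, Function.Embedding.coeFn_mk]
  exact ⟨fun h => lt_of_le_of_ne h (hdist i), fun h => h.le⟩

theorem stmt_19 {Ω : Type*} [MeasurableSpace Ω] (Pr : Measure Ω) [IsProbabilityMeasure Pr]
    (n : ℕ) (V : Fin (n + 1) → Ω → ℝ) (hmeas : ∀ i, Measurable (V i))
    (hexch : ∀ σ : Equiv.Perm (Fin (n + 1)),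
      Measure.map (fun ω i => V (σ i) ω) Pr = Measure.map (fun ω i => V i ω) Pr)
    (hties : ∀ i j : Fin (n + 1), i ≠ j → Pr {ω | V i ω = V j ω} = 0)
    (β : ℝ) (hβ : β ∈ Set.Ioo (0 : ℝ) 1)
    -- the event that `V_{n+1} ≤ Quantile(β; {V_1,…,V_n} ∪ {∞})`
    (E : Set Ω)
    (hE : E = {ω | ((V (Fin.last n) ω : ℝ) : EReal) ≤
      mquantile β
        ((Finset.univ.val.map fun i : Fin n => ((V i.castSucc ω : ℝ) : EReal)) + {⊤})}) :
    (⌈β * (n + 1 : ℝ)⌉.toNat ≤ n →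
      Pr E = ENNReal.ofReal ((⌈β * (n + 1 : ℝ)⌉ : ℝ) / (n + 1))) ∧
    (n < ⌈β * (n + 1 : ℝ)⌉.toNat → Pr E = 1) ∧
    ENNReal.ofReal β ≤ Pr E ∧
    Pr E ≤ ENNReal.ofReal (β + 1 / (n + 1)) := by
  classical
  obtain ⟨hβ0, hβ1⟩ := hβ
  set k := ⌈β * (n + 1 : ℝ)⌉.toNat with hkdef
  have hnpos : (0:ℝ) < n + 1 := by positivity
  have hceil_pos : 0 < ⌈β * (n + 1 : ℝ)⌉ := Int.ceil_pos.mpr (by positivity)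
  have hk1 : 1 ≤ k := by rw [hkdef]; omega
  have hceilk : (⌈β * (n + 1 : ℝ)⌉ : ℝ) = (k : ℝ) := by
    have h : ((k:ℤ):ℝ) = ((⌈β * (n + 1 : ℝ)⌉ : ℤ) : ℝ) := by
      rw [hkdef, Int.toNat_of_nonneg hceil_pos.le]
    rw [← h]; norm_cast
  have hceil_le : (⌈β * (n + 1 : ℝ)⌉ : ℝ) < β * (n+1) + 1 := Int.ceil_lt_add_one _
  have hceil_ge : β * (n+1) ≤ (⌈β * (n + 1 : ℝ)⌉ : ℝ) := Int.le_ceil _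
  -- the count functions
  set c : Fin (n+1) → Ω → ℕ :=
    fun i ω => (Finset.univ.filter fun j => V j ω ≤ V i ω).card with hc
  set A : Fin (n+1) → Set Ω := fun i => {ω | c i ω ≤ k} with hA
  have hcm : ∀ i, Measurable (c i) := by
    intro i
    have h : c i = fun ω => ∑ j : Fin (n+1), if V j ω ≤ V i ω then 1 else 0 := by
      funext ω
      simp only [hc]
      rw [Finset.card_filter]
    rw [h]
    exact Finset.measurable_sum _ fun j _ => Measurable.ite
      (measurableSet_le (hmeas j) (hmeas i)) measurable_const measurable_const
  have hAm : ∀ i, MeasurableSet (A i) := by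
    intro i
    have h : A i = (c i) ⁻¹' (Set.Iic k) := rfl
    rw [h]
    exact (hcm i) (by trivial)
  set N : Set Ω := ⋃ (i) (j) (_ : i ≠ j), {ω | V i ω = V j ω} with hNdef
  have hN : Pr N = 0 :=
    measure_iUnion_null fun i => measure_iUnion_null fun j =>
      measure_iUnion_null fun h => hties i j h
  have hexA : ∀ i, Pr (A i) = Pr (A (Fin.last n)) := by
    intro i
    set σ := Equiv.swap i (Fin.last n) with hσ
    set S : Set ((Fin (n+1)) → ℝ) :=
      {x | (Finset.univ.filter fun j => x j ≤ x (Fin.last n)).card ≤ k} with hS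
    have hSm : MeasurableSet S := by
      have h : S = (fun x : Fin (n+1) → ℝ =>
          ∑ j : Fin (n+1), if x j ≤ x (Fin.last n) then 1 else 0) ⁻¹' (Set.Iic k) := by
        ext x
        simp only [hS, Set.mem_setOf_eq, Set.mem_preimage, Set.mem_Iic, Finset.card_filter]
      rw [h]
      exact (Finset.measurable_sum _ fun j _ => Measurable.ite
        (measurableSet_le (measurable_pi_apply j) (measurable_pi_apply (Fin.last n)))
        measurable_const measurable_const) (by trivial)
    have hvec : Measurable (fun ω (j : Fin (n+1)) => V j ω) :=
      measurable_pi_lambda _ hmeas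
    have hg : Measurable (fun ω (j : Fin (n+1)) => V (σ j) ω) :=
      measurable_pi_lambda _ fun j => hmeas _
    have hpre : (fun ω (j : Fin (n+1)) => V (σ j) ω) ⁻¹' S = A i := by
      ext ω
      simp only [Set.mem_preimage, hS, Set.mem_setOf_eq, hA, hc]
      have hcard : (Finset.univ.filter fun j => V (σ j) ω ≤ V (σ (Fin.last n)) ω).card
          = (Finset.univ.filter fun j => V j ω ≤ V i ω).card := by
        rw [Equiv.swap_apply_right]
        apply Finset.card_bij (fun j _ => σ j)
        · intro a ha
          simp only [Finset.mem_filter, Finset.mem_univ, true_and] at ha ⊢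
          exact ha
        · intro a _ b _ hab
          exact σ.injective hab
        · intro b hb
          refine ⟨σ.symm b, ?_, by simp⟩
          simp only [Finset.mem_filter, Finset.mem_univ, true_and] at hb ⊢
          rw [Equiv.apply_symm_apply]
          exact hb
      rw [hcard]
    have hpre2 : (fun ω (j : Fin (n+1)) => V j ω) ⁻¹' S = A (Fin.last n) := rfl
    rw [← hpre, ← hpre2, ← Measure.map_apply hg hSm, ← Measure.map_apply hvec hSm, hexch σ]
  have hdist : ∀ ω, ω ∉ N → ∀ i j, i ≠ j → V i ω ≠ V j ω := by
    intro ω hω i j hij h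
    exact hω (Set.mem_iUnion.mpr ⟨i, Set.mem_iUnion.mpr ⟨j, Set.mem_iUnion.mpr ⟨hij, h⟩⟩⟩)
  have hcount : k ≤ n + 1 → ∀ ω, ω ∉ N →
      (Finset.univ.filter fun i => c i ω ≤ k).card = k := by
    intro hkn ω hω
    exact count_rank_le n k hkn (fun i => V i ω) (hdist ω hω)
  have hmemE : k ≤ n + 1 → ∀ ω, ω ∉ N → (ω ∈ E ↔ ω ∈ A (Fin.last n)) := by
    intro hkn ω hω
    have h1 : ω ∈ E ↔ (Finset.univ.filter fun i : Fin n =>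
        V i.castSucc ω < V (Fin.last n) ω).card ≤ k - 1 := by
      rw [hE, Set.mem_setOf_eq]
      exact mem_E_iff n β hk1 hkn (V (Fin.last n) ω) (fun i => V i.castSucc ω)
    have h2 : c (Fin.last n) ω = (Finset.univ.filter fun i : Fin n =>
        V i.castSucc ω < V (Fin.last n) ω).card + 1 := by
      simp only [hc]
      exact card_le_last_eq n (fun j => V j ω)
        (fun i => hdist ω hω _ _ (Fin.castSucc_lt_last i).ne)
    have h3 : ω ∈ A (Fin.last n) ↔ c (Fin.last n) ω ≤ k := Iff.rfl
    rw [h1, h3, h2]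
    omega
  have haeN : ∀ᵐ ω ∂Pr, ω ∉ N := measure_eq_zero_iff_ae_notMem.mp hN
  have hPrA : k ≤ n + 1 → Pr E = ENNReal.ofReal ((⌈β * (n + 1 : ℝ)⌉ : ℝ) / (n + 1)) := by
    intro hkn
    have hEA : Pr E = Pr (A (Fin.last n)) := by
      apply measure_congr
      filter_upwards [haeN] with ω hω
      exact propext (hmemE hkn ω hω)
    have hsum1 : ∑ i : Fin (n+1), Pr (A i) = ((n+1 : ℕ) : ℝ≥0∞) * Pr (A (Fin.last n)) := by
      rw [Finset.sum_congr rfl (fun i _ => hexA i), Finset.sum_const, Finset.card_univ,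
        Fintype.card_fin, nsmul_eq_mul]
    have hsum2 : ∑ i : Fin (n+1), Pr (A i) = (k : ℝ≥0∞) := by
      have h1 : ∑ i : Fin (n+1), Pr (A i)
          = ∑ i : Fin (n+1), ∫⁻ ω, (A i).indicator (fun _ => (1:ℝ≥0∞)) ω ∂Pr :=
        Finset.sum_congr rfl fun i _ => (lintegral_indicator_one (hAm i)).symm
      rw [h1, ← lintegral_finset_sum _ (fun i _ => measurable_const.indicator (hAm i))]
      have h2 : ∫⁻ ω, ∑ i : Fin (n+1), (A i).indicator (fun _ => (1:ℝ≥0∞)) ω ∂Pr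
          = ∫⁻ _, (k : ℝ≥0∞) ∂Pr := by
        apply lintegral_congr_ae
        filter_upwards [haeN] with ω hω
        have h3 : ∑ i : Fin (n+1), (A i).indicator (fun _ => (1:ℝ≥0∞)) ω
            = ((Finset.univ.filter fun i => c i ω ≤ k).card : ℝ≥0∞) := by
          rw [Finset.card_filter]
          push_cast
          apply Finset.sum_congr rfl
          intro i _
          by_cases h : c i ω ≤ k
          · simp [Set.indicator_apply, h, hA]
          · simp [Set.indicator_apply, h, hA]
        rw [h3, hcount hkn ω hω]
      rw [h2, lintegral_const, measure_univ, mul_one]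
    have hkey : ((n+1 : ℕ) : ℝ≥0∞) * Pr (A (Fin.last n)) = (k : ℝ≥0∞) := by
      rw [← hsum1, hsum2]
    have hfin : Pr (A (Fin.last n)) = (k : ℝ≥0∞) / ((n+1 : ℕ) : ℝ≥0∞) :=
      (ENNReal.eq_div_iff (by simp) (by simp)).mpr hkey
    rw [hEA, hfin, hceilk]
    have hcast : ((n:ℝ) + 1) = ((n+1 : ℕ) : ℝ) := by push_cast; ring
    rw [hcast, ENNReal.ofReal_div_of_pos (by exact_mod_cast hnpos), ENNReal.ofReal_natCast,
      ENNReal.ofReal_natCast]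
  have hbig : n + 2 ≤ k → Pr E = 1 := by
    intro h2
    have hEuniv : E = Set.univ := by
      rw [hE]
      ext ω
      simp only [Set.mem_setOf_eq, Set.mem_univ, iff_true]
      set s : Multiset EReal :=
        (Finset.univ.val.map fun i : Fin n => ((V i.castSucc ω : ℝ) : EReal)) + {⊤} with hs
      have hcard : Multiset.card s = n + 1 := by simp [hs]
      have hidx : (⌈β * ((Multiset.card s : ℕ) : ℝ)⌉.toNat - 1) = k - 1 := by
        rw [hcard, hkdef]; push_cast; rfl
      have htop : mquantile β s = ⊤ := by
        rw [mquantile, hidx]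
        apply List.getD_eq_default
        rw [Multiset.length_sort, hcard]
        omega
      rw [htop]
      exact le_top
    rw [hEuniv]
    exact measure_univ
  refine ⟨fun h => hPrA (by omega), fun h => ?_, ?_, ?_⟩
  · rcases Nat.lt_or_ge k (n+2) with h2 | h2
    · -- k = n+1
      have hk : k = n + 1 := by omega
      rw [hPrA (by omega), hceilk, hk]
      push_cast
      rw [div_self (by positivity)]
      simp
    · exact hbig h2
  · -- lower bound
    rcases Nat.lt_or_ge (n+1) k with h2 | h2
    · rw [hbig (by omega)]
      exact ENNReal.ofReal_le_of_le_toReal (by simp [hβ1.le])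
    · rw [hPrA h2]
      apply ENNReal.ofReal_le_ofReal
      rw [le_div_iff₀ hnpos]
      linarith
  · rcases Nat.lt_or_ge (n+1) k with h2 | h2
    · rw [hbig (by omega)]
      have : (1:ℝ) ≤ β + 1 / (n + 1) := by
        have : (n:ℝ) + 1 < β * (n+1) + 1 := by
          calc (n:ℝ) + 1 ≤ ((n:ℤ) + 2 : ℤ) := by push_cast; linarith
          _ ≤ (⌈β * (n + 1 : ℝ)⌉ : ℝ) := by
              have : ((n:ℤ) + 2) ≤ ⌈β * (n + 1 : ℝ)⌉ := by
                rw [hkdef] at h2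
                omega
              exact_mod_cast this
          _ < β * (n+1) + 1 := hceil_le
        have h1 : (n:ℝ) < β*(n+1) := by linarith
        have hinv : (1/((n:ℝ)+1)) * ((n:ℝ)+1) = 1 := by field_simp
        nlinarith [h1, hinv, hnpos]
      rw [← ENNReal.ofReal_one]
      exact ENNReal.ofReal_le_ofReal this
    · rw [hPrA h2]
      apply ENNReal.ofReal_le_ofReal
      rw [div_le_iff₀ hnpos]
      have : β * (n+1) + 1 ≤ (β + 1/(n+1)) * (n+1) := by
        field_simp; rfl
      linarith
end
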